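/- arXiv:2109.05632 — 12 statements merged into one kernel-verified Lean document; each statement's English description precedes it below -/
import Mathlib

section
/- Let Λ = ℤ[t,t⁻¹] be the ring of Laurent polynomials over ℤ, with the ring involution x ↦ x̄ induced by t ↦ t⁻¹, and let Xᴴ denote the conjugate transpose of a matrix over Λ. Fix a nonzero integer p and set q = 1 − 4p². For n ∈ ℤ define v_n = (1 + 2p·t⁻ⁿ, p − 2p²·t⁻ⁿ) ∈ Λ² and w_n = (1 + 2p·tⁿ, −p + 2p²·tⁿ) ∈ Λ². Suppose n, n' ∈ ℤ and there exist: an invertible matrix Φ ∈ M₂(Λ) such that Φᴴ·[[0,1],[0,0]]·Φ = [[0,1],[0,0]] + A − Aᴴ for some A ∈ M₂(Λ), and units h₁, h₂ ∈ Λ with h̄₁·h₁ = 1 and h̄₂·h₂ = 1, satisfying Φ·(h₁·v_n) = v_{n'} and Φ·(h₂·w_n) = w_{n'}. Then n = n'. (This is the concrete form of the distinctness of the boundary automorphism classes [t_g] ∈ bAut(∂(Λ, pq)) underlying Theorem 6.7 and Theorem 5.8: the 2-sided primitive embeddings (v_n, w_n) of ((Λ,pq),(Λ,−pq)) into the hyperbolic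 form are pairwise non-isomorphic, even after composing with automorphisms of the rank-one forms.) -/
/- STATEMENT 0: Distinctness of the 2-sided primitive embeddings (v_n, w_n) of
((Λ,pq),(Λ,−pq)) into the hyperbolic form over Λ = ℤ[t,t⁻¹], even after composing with
isometries of the hyperbolic form and automorphisms (unitary units) of the rank-one forms. -/

open LaurentPolynomial Matrix

/-- Λ = ℤ[t,t⁻¹], the ring of Laurent polynomials over ℤ. -/
noncomputable abbrev Lam : Type := LaurentPolynomial ℤ

/-- The ring involution x ↦ x̄ of Λ induced by t ↦ t⁻¹. -/
noncomputable def conjL : Lam →+* Lam := (LaurentPolynomial.invert (R := ℤ)).toRingEquiv.toRingHom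

/-- Conjugate transpose of a 2×2 matrix over Λ. -/
noncomputable def hconjL (M : Matrix (Fin 2) (Fin 2) Lam) : Matrix (Fin 2) (Fin 2) Lam :=
  (M.map conjL)ᵀ

/-- v_n = (1 + 2p·t⁻ⁿ, p − 2p²·t⁻ⁿ) ∈ Λ². -/
noncomputable def vL (p n : ℤ) : Fin 2 → Lam :=
  ![1 + C (2 * p) * T (-n), C p - C (2 * p ^ 2) * T (-n)]

/-- w_n = (1 + 2p·tⁿ, −p + 2p²·tⁿ) ∈ Λ². -/
noncomputable def wL (p n : ℤ) : Fin 2 → Lam :=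
  ![1 + C (2 * p) * T n, -C p + C (2 * p ^ 2) * T n]

lemma conjL_apply (f : Lam) (k : ℤ) : (conjL f).coeff k = f.coeff (-k) := invert_apply f k

lemma conjL_eq (f : Lam) : conjL f = invert f := rfl

/-- The coefficient-reduction ring homomorphism ℤ[T,T⁻¹] → (ℤ/m)[T,T⁻¹]. -/
noncomputable def piL (m : ℕ) : Lam →+* LaurentPolynomial (ZMod m) :=
  AddMonoidAlgebra.liftNCRingHom
    ((LaurentPolynomial.C (R := ZMod m)).comp (Int.castRingHom (ZMod m)))
    { toFun := fun x => T (Multiplicative.toAdd x),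
      map_one' := T_zero,
      map_mul' := fun a b => T_add (R := ZMod m) (Multiplicative.toAdd a) (Multiplicative.toAdd b) }
    (fun _ _ => Commute.all _ _)

lemma piL_single (m : ℕ) (k : ℤ) (a : ℤ) :
    piL m (AddMonoidAlgebra.single k a) = LaurentPolynomial.C (a : ZMod m) * T k := by
  rw [piL, AddMonoidAlgebra.liftNCRingHom_single]
  rfl

lemma piL_C (m : ℕ) (a : ℤ) : piL m (C a) = C ((a : ZMod m)) := by
  have h1 : (C a : Lam) = AddMonoidAlgebra.single 0 a := by rw [single_eq_C_mul_T, T_zero, mul_one]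
  have h2 : (C ((a : ZMod m)) : LaurentPolynomial (ZMod m)) = AddMonoidAlgebra.single 0 ((a:ZMod m)) := by
    rw [single_eq_C_mul_T, T_zero, mul_one]
  rw [h1, piL_single]; simp

lemma piL_T (m : ℕ) (k : ℤ) : piL m (T k) = T k := by
  have : (T k : Lam) = AddMonoidAlgebra.single k 1 := by rw [single_eq_C_mul_T, _root_.map_one, one_mul]
  rw [this, piL_single]; simp

/-- Classification of unitary units of Λ: if h̄·h = 1 then h = ±T k. -/
lemma unit_single (h : Lam) (hh : conjL h * h = 1) :
    ∃ (k e : ℤ), (e = 1 ∨ e = -1) ∧ h = C e * T k := by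
  have hc : h * conjL h = 1 := by rw [mul_comm]; exact hh
  have h0 : (h * conjL h).coeff 0 = 1 := by
    rw [hc, AddMonoidAlgebra.one_def, AddMonoidAlgebra.coeff_single]
    exact Finsupp.single_eq_same
  have hsum : ∑ a ∈ h.coeff.support, h.coeff a * h.coeff a = 1 := by
    rw [AddMonoidAlgebra.coeff_mul] at h0
    rw [← h0, Finsupp.sum]
    refine Finset.sum_congr rfl fun a _ => ?_
    have : ((conjL h).coeff.sum fun a₂ b₂ => if a + a₂ = 0 then h.coeff a * b₂ else 0)
        = h.coeff a * (conjL h).coeff (-a) := by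
      rw [Finsupp.sum]
      rw [Finset.sum_eq_single (-a)]
      · simp
      · intro b _ hb; simp [show ¬(a + b = 0) by omega]
      · intro hnb; simp [Finsupp.notMem_support_iff.mp hnb]
    rw [this, conjL_apply, neg_neg]
  have hpos : ∀ a ∈ h.coeff.support, 1 ≤ h.coeff a * h.coeff a := by
    intro a ha
    have := Finsupp.mem_support_iff.mp ha
    have := mul_self_pos.mpr this
    omega
  have hne : h.coeff.support.Nonempty := by
    by_contra hcon
    rw [Finset.not_nonempty_iff_eq_empty] at hcon
    rw [hcon] at hsum; simp at hsum
  have hcard : h.coeff.support.card = 1 := by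
    have hle := Finset.card_nsmul_le_sum h.coeff.support (fun a => h.coeff a * h.coeff a) 1 hpos
    have := Finset.card_pos.mpr hne
    rw [hsum] at hle
    have hcn : (h.coeff.support.card : ℤ) ≤ 1 := by simpa using hle
    omega
  obtain ⟨k, hk⟩ := Finset.card_eq_one.mp hcard
  have hsing := (Finsupp.support_eq_singleton.mp hk).2
  have hk1 : h.coeff k * h.coeff k = 1 := by rw [hk] at hsum; simpa using hsum
  refine ⟨k, h.coeff k, mul_self_eq_one_iff.mp hk1, ?_⟩
  rw [← single_eq_C_mul_T, ← AddMonoidAlgebra.ofCoeff_single, ← hsing]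

theorem stmt0 (p : ℤ) (hp : p ≠ 0) (n n' : ℤ)
    (Φ : Matrix (Fin 2) (Fin 2) Lam) (hΦ : IsUnit Φ)
    (A : Matrix (Fin 2) (Fin 2) Lam)
    (hiso : hconjL Φ * !![0, 1; 0, 0] * Φ = !![0, 1; 0, 0] + A - hconjL A)
    (h₁ h₂ : Lam) (hh₁ : conjL h₁ * h₁ = 1) (hh₂ : conjL h₂ * h₂ = 1)
    (hv : Φ.mulVec (h₁ • vL p n) = vL p n')
    (hw : Φ.mulVec (h₂ • wL p n) = wL p n') :
    n = n' := by
  -- (0) component equations over Λ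
  have hC2p : (C (2*p) : Lam) = 2 * C p := by rw [_root_.map_mul, _root_.map_ofNat]
  have hC2p2 : (C (2*p^2) : Lam) = 2 * (C p)^2 := by rw [_root_.map_mul, _root_.map_ofNat, _root_.map_pow]
  have hv0 : Φ 0 0 * (h₁ * (1 + 2 * C p * T (-n))) + Φ 0 1 * (h₁ * (C p - 2 * (C p)^2 * T (-n)))
      = 1 + 2 * C p * T (-n') := by
    have := congrFun hv 0
    simp only [Matrix.mulVec, dotProduct, Fin.sum_univ_two, Pi.smul_apply, smul_eq_mul,
      vL, Matrix.cons_val_zero, Matrix.cons_val_one, Matrix.head_cons, hC2p, hC2p2] at this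
    exact this
  have hv1 : Φ 1 0 * (h₁ * (1 + 2 * C p * T (-n))) + Φ 1 1 * (h₁ * (C p - 2 * (C p)^2 * T (-n)))
      = C p - 2 * (C p)^2 * T (-n') := by
    have := congrFun hv 1
    simp only [Matrix.mulVec, dotProduct, Fin.sum_univ_two, Pi.smul_apply, smul_eq_mul,
      vL, Matrix.cons_val_zero, Matrix.cons_val_one, Matrix.head_cons, hC2p, hC2p2] at this
    exact this
  have hw0 : Φ 0 0 * (h₂ * (1 + 2 * C p * T n)) + Φ 0 1 * (h₂ * (-C p + 2 * (C p)^2 * T n))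
      = 1 + 2 * C p * T n' := by
    have := congrFun hw 0
    simp only [Matrix.mulVec, dotProduct, Fin.sum_univ_two, Pi.smul_apply, smul_eq_mul,
      wL, Matrix.cons_val_zero, Matrix.cons_val_one, Matrix.head_cons, hC2p, hC2p2] at this
    exact this
  have hw1 : Φ 1 0 * (h₂ * (1 + 2 * C p * T n)) + Φ 1 1 * (h₂ * (-C p + 2 * (C p)^2 * T n))
      = -C p + 2 * (C p)^2 * T n' := by
    have := congrFun hw 1
    simp only [Matrix.mulVec, dotProduct, Fin.sum_univ_two, Pi.smul_apply, smul_eq_mul,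
      wL, Matrix.cons_val_zero, Matrix.cons_val_one, Matrix.head_cons, hC2p, hC2p2] at this
    exact this
  -- (1) the modulus ℓ = 4p² − 1
  have hp2 : 1 ≤ p^2 := by rcases lt_or_gt_of_ne hp with h|h <;> nlinarith
  set ℓ : ℕ := (4*p^2 - 1).toNat with hℓdef
  have hℓcast : ((ℓ : ℕ) : ℤ) = 4*p^2 - 1 := Int.toNat_of_nonneg (by nlinarith)
  have hℓ3 : 3 ≤ ℓ := by omega
  haveI : Fact (1 < ℓ) := ⟨by omega⟩
  -- (2) mapped equations mod ℓ
  have mA0 := congrArg (piL ℓ) hv0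
  have mA1 := congrArg (piL ℓ) hv1
  have mB0 := congrArg (piL ℓ) hw0
  have mB1 := congrArg (piL ℓ) hw1
  have mh1 := congrArg (piL ℓ) hh₁
  have mh2 := congrArg (piL ℓ) hh₂
  simp only [_root_.map_add, _root_.map_mul, _root_.map_sub, _root_.map_neg, _root_.map_one, _root_.map_pow, _root_.map_ofNat, piL_C, piL_T]
    at mA0 mA1 mB0 mB1 mh1 mh2
  set P : LaurentPolynomial (ZMod ℓ) := C ((p : ZMod ℓ)) with hPdef
  set g1 : LaurentPolynomial (ZMod ℓ) := piL ℓ (conjL h₁) with hg1def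
  set g2 : LaurentPolynomial (ZMod ℓ) := piL ℓ (conjL h₂) with hg2def
  set e1 : LaurentPolynomial (ZMod ℓ) := piL ℓ h₁ with he1def
  set e2 : LaurentPolynomial (ZMod ℓ) := piL ℓ h₂ with he2def
  set F00 : LaurentPolynomial (ZMod ℓ) := piL ℓ (Φ 0 0) with hF00def
  set F01 : LaurentPolynomial (ZMod ℓ) := piL ℓ (Φ 0 1) with hF01def
  set F10 : LaurentPolynomial (ZMod ℓ) := piL ℓ (Φ 1 0) with hF10def
  set F11 : LaurentPolynomial (ZMod ℓ) := piL ℓ (Φ 1 1) with hF11def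
  have R1 : (T n : LaurentPolynomial (ZMod ℓ)) * T (-n) = 1 := by
    rw [← T_add]; simp
  have h40 : ((4*p^2 - 1 : ℤ) : ZMod ℓ) = 0 := by
    rw [← hℓcast, Int.cast_natCast, ZMod.natCast_self]
  have h41 : 4 * ((p : ZMod ℓ))^2 = 1 := by
    push_cast at h40; linear_combination h40
  have R3 : (4 : LaurentPolynomial (ZMod ℓ)) * P^2 = 1 := by
    rw [hPdef, ← _root_.map_ofNat (C : ZMod ℓ →+* LaurentPolynomial (ZMod ℓ)) 4, ← _root_.map_pow, ← _root_.map_mul,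
      h41, _root_.map_one]
  -- (3) the key identity mod ℓ
  have hKey : (4 : LaurentPolynomial (ZMod ℓ)) * (g1 * T n) = 4 * (g2 * T n') := by
    linear_combination (-1*g1*(T n) + (-2)*g1*P*(T n)^2 + (-4)*g1*P^2*(T n) + 8*g1*P^3*(T n)^2) * mA0 + ((-8)*g1*P*(T n)) * mA1 + (g2*(T n) + 2*g2*P*(T n)*(T (-n)) + (-4)*g2*P^2*(T n) + 8*g2*P^3*(T n)*(T (-n))) * mB0 + (16*g2*P^2*(T n)*(T (-n))) * mB1 + (8*F11*P^2*(T n) + (-16)*F11*P^3*(T n)*(T (-n)) + 8*F10*P*(T n) + 16*F10*P^2*(T n)*(T (-n)) + F01*P*(T n) + (-2)*F01*P^2*(T n)*(T (-n)) + 2*F01*P^2*(T n)^2 + 4*F01*P^3*(T n) + (-4)*F01*P^3*(T n)^2*(T (-n)) + (-8)*F01*P^4*(T n)*(T (-n)) + (-8)*F01*P^4*(T n)^2 + 16*F01*P^5*(T n)^2*(T (-n)) + F00*(T n) + 2*F00*P*(T n)*(T (-n)) + 2*F00*P*(T n)^2 + 4*F00*P^2*(T n) + 4*F00*P^2*(T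 n)^2*(T (-n)) + 8*F00*P^3*(T n)*(T (-n)) + (-8)*F00*P^3*(T n)^2 + (-16)*F00*P^4*(T n)^2*(T (-n))) * mh1 + (16*F11*P^3*(T n)*(T (-n)) + (-32)*F11*P^4*(T n)^2*(T (-n)) + (-16)*F10*P^2*(T n)*(T (-n)) + (-32)*F10*P^3*(T n)^2*(T (-n)) + F01*P*(T n) + 2*F01*P^2*(T n)*(T (-n)) + (-2)*F01*P^2*(T n)^2 + (-4)*F01*P^3*(T n) + (-4)*F01*P^3*(T n)^2*(T (-n)) + 8*F01*P^4*(T n)*(T (-n)) + 8*F01*P^4*(T n)^2 + (-16)*F01*P^5*(T n)^2*(T (-n)) + -1*F00*(T n) + (-2)*F00*P*(T n)*(T (-n)) + (-2)*F00*P*(T n)^2 + 4*F00*P^2*(T n) + (-4)*F00*P^2*(T n)^2*(T (-n)) + (-8)*F00*P^3*(T n)*(T (-n)) + 8*F00*P^3*(T n)^2 + (-16)*F00*P^4*(T n)^2*(T (-n))) * mh2 + ((-32)*F11*P^4*(T n) + (-32)*F10*P^3*(T n) + (-8)*F01*P^3*(T n) + (-32)*F00*P^4*(T n) + 2*g2*P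 + 4*g2*P^2*(T n') + (-8)*g2*P^3 + 48*g2*P^4*(T n')) * R1 + ((-8)*F11*P^2*(T n) + (-8)*F10*P*(T n) + (-2)*F01*P*(T n) + (-8)*F00*P^2*(T n) + 4*g2*(T n') + -1*g2*(T n) + (-2)*g2*P + (-2)*g2*P*(T n)*(T n') + 12*g2*P^2*(T n') + (-3)*g1*(T n) + 2*g1*P*(T n)*(T (-n')) + 2*g1*P*(T n)^2 + 4*g1*P^2*(T n)^2*(T (-n'))) * R3
  have hgl : g1 * T n = g2 * T n' := by
    linear_combination P^2 * hKey - (g1 * T n - g2 * T n') * R3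
  -- (4) mod 2
  have nA0 := congrArg (piL 2) hv0
  have nB0 := congrArg (piL 2) hw0
  have nh1 := congrArg (piL 2) hh₁
  have nh2 := congrArg (piL 2) hh₂
  simp only [_root_.map_add, _root_.map_mul, _root_.map_sub, _root_.map_neg, _root_.map_one, _root_.map_pow, _root_.map_ofNat, piL_C, piL_T]
    at nA0 nB0 nh1 nh2
  set Q : LaurentPolynomial (ZMod 2) := C ((p : ZMod 2)) with hQdef
  set q1 : LaurentPolynomial (ZMod 2) := piL 2 (conjL h₁) with hq1def
  set q2 : LaurentPolynomial (ZMod 2) := piL 2 (conjL h₂) with hq2def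
  set f1 : LaurentPolynomial (ZMod 2) := piL 2 h₁ with hf1def
  set f2 : LaurentPolynomial (ZMod 2) := piL 2 h₂ with hf2def
  set G00 : LaurentPolynomial (ZMod 2) := piL 2 (Φ 0 0) with hG00def
  set G01 : LaurentPolynomial (ZMod 2) := piL 2 (Φ 0 1) with hG01def
  have h2z : (2 : LaurentPolynomial (ZMod 2)) = 0 := by
    rw [← _root_.map_ofNat (C : ZMod 2 →+* LaurentPolynomial (ZMod 2)) 2,
      show (2 : ZMod 2) = 0 from rfl, _root_.map_zero]
  have hfe : f1 = f2 := by
    linear_combination f2 * nA0 - f1 * nB0 -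
      (f1*f2*G00*(Q*T (-n) - Q*T n) + f1*f2*G01*(Q - Q^2*T (-n) - Q^2*T n)
        - Q*T (-n')*f2 + Q*T n'*f1) * h2z
  have hg2 : q1 = q2 := by
    linear_combination q2 * nh1 - q1 * nh2 - q1*q2 * hfe
  -- (5) unit classification and conclusion
  obtain ⟨k₁, ε₁, hε₁, h₁eq⟩ := unit_single h₁ hh₁
  obtain ⟨k₂, ε₂, hε₂, h₂eq⟩ := unit_single h₂ hh₂
  have hc1 : conjL h₁ = C ε₁ * T (-k₁) := by
    rw [h₁eq, conjL_eq, _root_.map_mul, invert_C, invert_T]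
  have hc2 : conjL h₂ = C ε₂ * T (-k₂) := by
    rw [h₂eq, conjL_eq, _root_.map_mul, invert_C, invert_T]
  -- images
  have hg1im : g1 = C ((ε₁ : ZMod ℓ)) * T (-k₁) := by
    rw [hg1def, hc1, _root_.map_mul, piL_C, piL_T]
  have hg2im : g2 = C ((ε₂ : ZMod ℓ)) * T (-k₂) := by
    rw [hg2def, hc2, _root_.map_mul, piL_C, piL_T]
  have hq1im : q1 = C ((ε₁ : ZMod 2)) * T (-k₁) := by
    rw [hq1def, hc1, _root_.map_mul, piL_C, piL_T]
  have hq2im : q2 = C ((ε₂ : ZMod 2)) * T (-k₂) := by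
    rw [hq2def, hc2, _root_.map_mul, piL_C, piL_T]
  -- rewrite as singles
  have hεℓ1 : ((ε₁ : ZMod ℓ)) ≠ 0 := by
    rcases hε₁ with h|h <;> rw [h] <;> simp
  have hεℓ2 : ((ε₂ : ZMod ℓ)) ≠ 0 := by
    rcases hε₂ with h|h <;> rw [h] <;> simp
  have hε21 : ((ε₁ : ZMod 2)) ≠ 0 := by
    rcases hε₁ with h|h <;> rw [h] <;> decide
  have hsingℓ : (AddMonoidAlgebra.single (-k₁ + n) ((ε₁ : ZMod ℓ)) : LaurentPolynomial (ZMod ℓ))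
      = AddMonoidAlgebra.single (-k₂ + n') ((ε₂ : ZMod ℓ)) := by
    rw [single_eq_C_mul_T, single_eq_C_mul_T, T_add, T_add, ← mul_assoc, ← mul_assoc]
    rw [hg1im, hg2im] at hgl
    exact hgl
  have hsing2 : (AddMonoidAlgebra.single (-k₁) ((ε₁ : ZMod 2)) : LaurentPolynomial (ZMod 2))
      = AddMonoidAlgebra.single (-k₂) ((ε₂ : ZMod 2)) := by
    rw [single_eq_C_mul_T, single_eq_C_mul_T]
    rw [hq1im, hq2im] at hg2
    exact hg2
  have e1 : -k₁ + n = -k₂ + n' := by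
    rcases AddMonoidAlgebra.single_inj.mp hsingℓ with ⟨h, _⟩|⟨h, _⟩
    · exact h
    · exact absurd h hεℓ1
  have e2 : -k₁ = -k₂ := by
    rcases AddMonoidAlgebra.single_inj.mp hsing2 with ⟨h, _⟩|⟨h, _⟩
    · exact h
    · exact absurd h hε21
  omega
end

section
/- Let π be a multiplicative abelian group, Λ = ℤ[π] its integral group ring with the involution x ↦ x̄ induced by g ↦ g⁻¹. Fix p ∈ ℤ, set q = 1 − 4p², and fix g ∈ π. Then there exist a matrix u ∈ M₂(Λ) with det u = 1 and a matrix A ∈ M₂(Λ) such that uᴴ·[[0,0],[1,0]]·u = [[pq·1, 0],[2p·g⁻¹ + q·1, g − p·1]] + A − Aᴴ. In other words, the (+1)-quadratic form on Λ² represented by the matrix [[pq, 0],[2p·g⁻¹ + q, g − p]] (which is the union (Λ,pq) ∪_{t_g} (Λ,−pq)) is hyperbolic. (Proposition 6.8.) -/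
/- STATEMENT 1 (Proposition 6.8): over Λ = ℤ[π] for π an abelian group, the (+1)-quadratic
form represented by [[pq, 0],[2p·g⁻¹ + q, g − p]] (the union (Λ,pq) ∪_{t_g} (Λ,−pq)) is
hyperbolic: there is a simple isometry u (det u = 1) carrying the standard hyperbolic form
[[0,0],[1,0]] to it, up to matrices of the form A − Aᴴ. -/

open Matrix

/-- The involution x ↦ x̄ of ℤ[π] induced by g ↦ g⁻¹. -/
noncomputable def conjM (π : Type*) [CommGroup π] :
    MonoidAlgebra ℤ π →+* MonoidAlgebra ℤ π :=
  MonoidAlgebra.mapDomainRingHom ℤ (invMonoidHom : π →* π)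

/-- Conjugate transpose of a 2×2 matrix over ℤ[π]. -/
noncomputable def hconjM (π : Type*) [CommGroup π]
    (M : Matrix (Fin 2) (Fin 2) (MonoidAlgebra ℤ π)) :
    Matrix (Fin 2) (Fin 2) (MonoidAlgebra ℤ π) :=
  (M.map (conjM π))ᵀ

lemma conjM_of' (π : Type*) [CommGroup π] (g : π) :
    conjM π (MonoidAlgebra.of ℤ π g) = MonoidAlgebra.of ℤ π g⁻¹ := by
  simp [conjM, MonoidAlgebra.mapDomainRingHom_apply, MonoidAlgebra.of_apply,
    Finsupp.mapDomain_single, invMonoidHom]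

lemma hconjM_fin_two (π : Type*) [CommGroup π] (x y z w : MonoidAlgebra ℤ π) :
    hconjM π !![x, y; z, w] = !![conjM π x, conjM π z; conjM π y, conjM π w] := by
  ext i j
  fin_cases i <;> fin_cases j <;> simp [hconjM]

theorem stmt1 (π : Type*) [CommGroup π] (p : ℤ) (g : π) :
    ∃ u A : Matrix (Fin 2) (Fin 2) (MonoidAlgebra ℤ π),
      u.det = 1 ∧
      hconjM π u * !![0, 0; 1, 0] * u =
        !![((p * (1 - 4 * p ^ 2) : ℤ) : MonoidAlgebra ℤ π), 0;
           ((2 * p : ℤ) : MonoidAlgebra ℤ π) * MonoidAlgebra.of ℤ π g⁻¹ +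
             ((1 - 4 * p ^ 2 : ℤ) : MonoidAlgebra ℤ π),
           MonoidAlgebra.of ℤ π g - ((p : ℤ) : MonoidAlgebra ℤ π)] + A - hconjM π A := by
  set a : MonoidAlgebra ℤ π := MonoidAlgebra.of ℤ π g with ha
  set b : MonoidAlgebra ℤ π := MonoidAlgebra.of ℤ π g⁻¹ with hb
  set P : MonoidAlgebra ℤ π := ((p : ℤ) : MonoidAlgebra ℤ π) with hP
  have hab : a * b = 1 := by
    rw [ha, hb, ← _root_.map_mul, mul_inv_cancel, _root_.map_one]
  have hca : conjM π a = b := by rw [ha, hb, conjM_of']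
  have hcb : conjM π b = a := by rw [ha, hb, conjM_of', inv_inv]
  have hcP : conjM π P = P := by rw [hP, map_intCast]
  refine ⟨!![-1 - 2*P*b, -b; P - b + 2*P^2*b - 2*P*b^2 + a, P*b - b^2],
    !![a + 2*P^2*a + 2*P*a^2, 1 - 2*P^2 - P*b - b^2 + 2*P*a; 0, 0], ?_, ?_⟩
  · rw [Matrix.det_fin_two_of]
    linear_combination hab
  · rw [hconjM_fin_two, hconjM_fin_two]
    push_cast
    have e1 : conjM π (-1 - 2*P*b) = -1 - 2*P*a := by
      simp [_root_.map_sub, _root_.map_mul, _root_.map_neg, _root_.map_one, _root_.map_ofNat, hcb, hcP]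
    have e2 : conjM π (-b : MonoidAlgebra ℤ π) = -a := by simp [hcb]
    have e3 : conjM π (P - b + 2*P^2*b - 2*P*b^2 + a) =
        P - a + 2*P^2*a - 2*P*a^2 + b := by
      simp [_root_.map_add, _root_.map_sub, _root_.map_mul, _root_.map_pow, _root_.map_ofNat, hca, hcb, hcP]
    have e4 : conjM π (P*b - b^2) = P*a - a^2 := by
      simp [_root_.map_sub, _root_.map_mul, _root_.map_pow, hcb, hcP]
    have e5 : conjM π (a + 2*P^2*a + 2*P*a^2) = b + 2*P^2*b + 2*P*b^2 := by
      simp [_root_.map_add, _root_.map_mul, _root_.map_pow, _root_.map_ofNat, hca, hcP]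
    have e6 : conjM π (1 - 2*P^2 - P*b - b^2 + 2*P*a) =
        1 - 2*P^2 - P*a - a^2 + 2*P*b := by
      simp [_root_.map_add, _root_.map_sub, _root_.map_mul, _root_.map_pow, _root_.map_one, _root_.map_ofNat, hca, hcb, hcP]
    rw [e1, e2, e3, e4, e5, e6, map_zero (conjM π)]
    rw [← hP]
    rw [← Matrix.ext_iff]
    intro i j
    fin_cases i <;> fin_cases j <;>
      simp [Matrix.mul_apply, Fin.sum_univ_two, Matrix.add_apply, Matrix.sub_apply]
    · linear_combination (2*P - 4*P^3 + 4*P^2*a) * hab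
    · linear_combination (1 - 2*P^2 + 2*P*a) * hab
    · linear_combination (-2*P^2 + 2*P*a) * hab
    · linear_combination (a - P) * hab
end

section
/- Let π be a multiplicative abelian group and Λ = ℤ[π] its integral group ring. Let p be a nonzero integer and q = 1 − 4p². Let g, g' ∈ π and suppose there exist ε ∈ {1, −1} and γ ∈ π such that (2p·g' + q·1) − ε·γ·(2p·g + q·1) lies in the principal ideal (2pq)·Λ. Then g = g'. (This is the concrete injectivity statement of Proposition 6.6: the elements b_g = 2p·g + q, for g ∈ π, represent pairwise distinct classes in Λ/(2pq) modulo multiplication by the unitary units ±γ of Λ.) -/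
/- STATEMENT 2 (Proposition 6.6, concrete injectivity): in Λ = ℤ[π], π abelian, with p ≠ 0
and q = 1 − 4p², the elements b_g = 2p·g + q·1 represent pairwise distinct classes in
Λ/(2pq) modulo multiplication by the unitary units ±γ. -/

theorem stmt2 (π : Type*) [CommGroup π] (p : ℤ) (hp : p ≠ 0) (g g' : π)
    (ε : ℤ) (hε : ε = 1 ∨ ε = -1) (γ : π)
    (h : ∃ c : MonoidAlgebra ℤ π,
      (((2 * p : ℤ) : MonoidAlgebra ℤ π) * MonoidAlgebra.of ℤ π g' +
          ((1 - 4 * p ^ 2 : ℤ) : MonoidAlgebra ℤ π)) -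
        (ε : MonoidAlgebra ℤ π) * MonoidAlgebra.of ℤ π γ *
          (((2 * p : ℤ) : MonoidAlgebra ℤ π) * MonoidAlgebra.of ℤ π g +
            ((1 - 4 * p ^ 2 : ℤ) : MonoidAlgebra ℤ π)) =
      ((2 * p * (1 - 4 * p ^ 2) : ℤ) : MonoidAlgebra ℤ π) * c) :
    g = g' := by
  classical
  obtain ⟨c, hc⟩ := h
  set q : ℤ := 1 - 4 * p ^ 2 with hq
  have hsing : ∀ n : ℤ, ((n : ℤ) : MonoidAlgebra ℤ π) = MonoidAlgebra.single (1:π) n :=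
    fun n => rfl
  have hof : ∀ a : π, MonoidAlgebra.of ℤ π a = MonoidAlgebra.single a (1:ℤ) := fun a => rfl
  rw [hsing, hsing, hsing, hof, hof, hof] at hc
  rw [hsing (2*p*q)] at hc
  simp only [mul_add, MonoidAlgebra.single_mul_single, one_mul, mul_one] at hc
  have key : ∀ x : π,
      (if g' = x then 2*p else 0) + (if (1:π) = x then q else 0)
        - ((if γ*g = x then ε*(2*p) else 0) + (if γ = x then ε*q else 0))
      = 2*p*q * c.coeff x := by
    intro x
    have := congrArg (fun f : MonoidAlgebra ℤ π => f.coeff x) hc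
    simp only [MonoidAlgebra.single_one_mul_apply] at this
    rw [MonoidAlgebra.coeff_sub, MonoidAlgebra.coeff_add, MonoidAlgebra.coeff_add,
      Finsupp.sub_apply, Finsupp.add_apply, Finsupp.add_apply] at this
    simpa only [MonoidAlgebra.coeff_single, Finsupp.single_apply] using this
  have hq3 : q ≤ -3 := by
    rw [hq]; nlinarith [Int.one_le_abs hp, sq_abs p]
  have hcop : IsCoprime q (2*p) := ⟨1, 2*p, by rw [hq]; ring⟩
  have main : γ * g = g' ∧ ε = 1 := by
    have h1 := key g'
    have e1 : (if (1:π) = g' then q else 0) = q * (if (1:π) = g' then 1 else 0) := by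
      split <;> ring
    have e2 : (if γ = g' then ε*q else 0) = q * (if γ = g' then ε else 0) := by
      split <;> ring
    rw [e1, e2] at h1
    by_cases hc1 : γ * g = g'
    · refine ⟨hc1, ?_⟩
      rw [if_pos hc1, if_pos (rfl : g' = g')] at h1
      have hdvd : q ∣ (1 - ε) * (2*p) :=
        ⟨2*p * c.coeff g' - (if (1:π) = g' then 1 else 0) + (if γ = g' then ε else 0), by
          linear_combination h1⟩
      have hdε : q ∣ 1 - ε := hcop.dvd_of_dvd_mul_right hdvd
      rcases hε with rfl | rfl
      · rfl
      · exfalso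
        norm_num at hdε
        have := Int.le_of_dvd (by norm_num) ((neg_dvd).mpr hdε)
        omega
    · exfalso
      rw [if_neg hc1, if_pos rfl] at h1
      have hdvd : q ∣ 2*p :=
        ⟨2*p * c.coeff g' - (if (1:π) = g' then 1 else 0) + (if γ = g' then ε else 0), by
          linear_combination h1⟩
      have hu := IsCoprime.isUnit_of_dvd' hcop dvd_rfl hdvd
      rw [Int.isUnit_iff] at hu
      omega
  obtain ⟨hgg, rfl⟩ := main
  by_cases hγ : γ = 1
  · subst hγ; rw [one_mul] at hgg; exact hgg
  · exfalso
    have h2 := key 1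
    rw [hgg, if_neg hγ] at h2
    simp only [one_mul, if_true] at h2
    have hdvd : 2*p ∣ q := ⟨q * c.coeff 1, by linear_combination h2⟩
    have hu := IsCoprime.isUnit_of_dvd' hcop.symm dvd_rfl hdvd
    rw [Int.isUnit_iff] at hu
    omega
end

section
/- Let π be a multiplicative abelian group and Λ = ℤ[π] its integral group ring. Let p be a nonzero integer and q = 1 − 4p². Let g, g' ∈ π, ε ∈ {1, −1} and γ ∈ π. If ε·γ − 1 ∈ (2p)·Λ and 2p·g − ε·γ·(2p·g') ∈ q·Λ, then g = g'. (Lemma 6.5: injectivity of the composite map l' ∘ r ∘ h ∘ t from π to (U(Λ/2p) × U(Λ/q))/U(Λ).) -/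
/- STATEMENT 3 (Lemma 6.5): injectivity of the composite l' ∘ r ∘ h ∘ t from π to
(U(Λ/2p) × U(Λ/q))/U(Λ), in concrete form: if ε·γ ≡ 1 mod 2p and 2p·g ≡ ε·γ·2p·g' mod q
in Λ = ℤ[π], with p ≠ 0 and q = 1 − 4p², then g = g'. -/

theorem stmt3 (π : Type*) [CommGroup π] (p : ℤ) (hp : p ≠ 0) (g g' : π)
    (ε : ℤ) (hε : ε = 1 ∨ ε = -1) (γ : π)
    (h1 : ∃ c : MonoidAlgebra ℤ π,
      (ε : MonoidAlgebra ℤ π) * MonoidAlgebra.of ℤ π γ - 1 =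
        ((2 * p : ℤ) : MonoidAlgebra ℤ π) * c)
    (h2 : ∃ c : MonoidAlgebra ℤ π,
      ((2 * p : ℤ) : MonoidAlgebra ℤ π) * MonoidAlgebra.of ℤ π g -
        (ε : MonoidAlgebra ℤ π) * MonoidAlgebra.of ℤ π γ *
          (((2 * p : ℤ) : MonoidAlgebra ℤ π) * MonoidAlgebra.of ℤ π g') =
        ((1 - 4 * p ^ 2 : ℤ) : MonoidAlgebra ℤ π) * c) :
    g = g' := by
  classical
  obtain ⟨c₁, h1⟩ := h1
  obtain ⟨c₂, h2⟩ := h2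
  have hp1 : 1 ≤ p ^ 2 := by rcases lt_or_gt_of_ne hp with h | h <;> nlinarith
  have hqneg : (1 - 4*p^2 : ℤ) < 0 := by nlinarith
  have hcontra : ∀ k : ℤ, 0 < k → k ≤ 2 → ¬ (1 - 4*p^2 : ℤ) ∣ k := by
    intro k hk hk2 hd
    have := Int.le_of_dvd hk ((abs_dvd _ _).mpr hd)
    rw [abs_of_neg hqneg] at this
    linarith
  have castmul : ∀ (n : ℤ) (x : MonoidAlgebra ℤ π) (a : π),
      ((n : MonoidAlgebra ℤ π) * x).coeff a = n * x.coeff a := by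
    intro n x a
    rw [← zsmul_eq_mul, MonoidAlgebra.coeff_smul, Finsupp.smul_apply, smul_eq_mul]
  have key : MonoidAlgebra.of ℤ π g - (ε : MonoidAlgebra ℤ π) * MonoidAlgebra.of ℤ π (γ * g')
      = ((1 - 4 * p ^ 2 : ℤ) : MonoidAlgebra ℤ π) *
        (((2 * p : ℤ) : MonoidAlgebra ℤ π) * c₂ +
          (MonoidAlgebra.of ℤ π g - (ε : MonoidAlgebra ℤ π) * MonoidAlgebra.of ℤ π (γ * g'))) := by
    rw [map_mul]
    linear_combination (norm := (push_cast; ring1)) ((2 * p : ℤ) : MonoidAlgebra ℤ π) * h2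
  have subap : ∀ (x y : MonoidAlgebra ℤ π) (a : π), (x - y).coeff a = x.coeff a - y.coeff a := by
    intro x y a; exact Finsupp.sub_apply x.coeff y.coeff a
  have addap : ∀ (x y : MonoidAlgebra ℤ π) (a : π), (x + y).coeff a = x.coeff a + y.coeff a := by
    intro x y a; exact Finsupp.add_apply x.coeff y.coeff a
  have singleap : ∀ (b c : π) (m : ℤ), (MonoidAlgebra.single b m).coeff c = if b = c then m else 0 := by
    intro b c m; exact Finsupp.single_apply
  have hkg := congrArg (fun f : MonoidAlgebra ℤ π => f.coeff g) key
  simp only [subap, addap, castmul, MonoidAlgebra.of_apply, singleap, if_pos rfl, if_true] at hkg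
  by_cases hgg : γ * g' = g
  · rcases hε with rfl | rfl
    · -- ε = 1 : use h1 to show γ = 1
      by_cases hγ : γ = 1
      · rw [hγ, one_mul] at hgg; exact hgg.symm
      · exfalso
        have h1g := congrArg (fun f : MonoidAlgebra ℤ π => f.coeff 1) h1
        simp only [Int.cast_one, MonoidAlgebra.single_mul_single, one_mul, mul_one, subap, castmul, MonoidAlgebra.of_apply, singleap,
          MonoidAlgebra.one_def, if_neg hγ, if_pos rfl, if_true] at h1g
        have : (2:ℤ) ∣ -1 := ⟨p * c₁.coeff 1, by linarith⟩
        omega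
    · -- ε = -1 : coefficient 2
      exfalso
      rw [if_pos hgg] at hkg
      exact hcontra 2 (by norm_num) le_rfl ⟨2 * p * c₂.coeff g + 2, by linarith [hkg]⟩
  · exfalso
    rw [if_neg hgg] at hkg
    exact hcontra 1 (by norm_num) (by norm_num) ⟨2 * p * c₂.coeff g + 1, by linarith [hkg]⟩
end

section
/- Let π be a multiplicative abelian group and Λ = ℤ[π] its integral group ring, with the involution x ↦ x̄ induced ℤ-linearly by g ↦ g⁻¹. Then an element x ∈ Λ satisfies x·x̄ = 1 if and only if there exists g ∈ π such that x = g or x = −g (i.e., x is supported on a single group element with coefficient ±1). Equivalently, the group of unitary units of Λ is U(Λ) = {±g : g ∈ π}. (Lemma 6.2.) -/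
lemma conjM_apply (π : Type*) [CommGroup π] (x : MonoidAlgebra ℤ π) (a : π) :
    (conjM π x).coeff a = x.coeff a⁻¹ := by
  show Finsupp.mapDomain _ x.coeff a = _
  rw [show a = invMonoidHom a⁻¹ from (inv_inv a).symm]
  rw [Finsupp.mapDomain_apply (fun _ _ h => by simpa using inv_injective h)]
  simp [invMonoidHom]

lemma coeff_one (π : Type*) [CommGroup π] (x : MonoidAlgebra ℤ π) :
    (x * conjM π x).coeff 1 = ∑ a ∈ x.coeff.support, (x.coeff a)^2 := by
  classical
  rw [MonoidAlgebra.coeff_mul]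
  rw [Finsupp.sum]
  apply Finset.sum_congr rfl
  intro a ha
  have : (Finsupp.sum (conjM π x).coeff fun a₂ b₂ => if a * a₂ = 1 then x.coeff a * b₂ else 0)
      = Finsupp.sum (conjM π x).coeff fun a₂ b₂ => if a₂ = a⁻¹ then x.coeff a * b₂ else 0 := by
    apply Finsupp.sum_congr
    intro b _
    congr 1
    simp only [mul_eq_one_iff_eq_inv]
    exact propext ⟨fun h => by simp [h], fun h => by simp [h]⟩
  rw [this, Finsupp.sum_ite_eq' (conjM π x).coeff a⁻¹ (fun _ b => x.coeff a * b)]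
  have h2 : (conjM π x).coeff a⁻¹ = x.coeff a := by rw [conjM_apply]; simp
  split_ifs with h
  · rw [h2]; ring
  · simp only [Finsupp.notMem_support_iff] at h
    rw [h2] at h
    rw [h]; ring

theorem stmt5 (π : Type*) [CommGroup π] (x : MonoidAlgebra ℤ π) :
    x * conjM π x = 1 ↔
      ∃ g : π, x = MonoidAlgebra.of ℤ π g ∨ x = -MonoidAlgebra.of ℤ π g := by
  classical
  constructor
  · intro h
    have h1 : ∑ a ∈ x.coeff.support, (x.coeff a)^2 = 1 := by
      rw [← coeff_one π x, h]
      simp [MonoidAlgebra.one_def]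
    have hcard : x.coeff.support.card ≤ 1 := by
      by_contra hc
      push_neg at hc
      have : (x.coeff.support.card : ℤ) ≤ ∑ a ∈ x.coeff.support, (x.coeff a)^2 := by
        have := Finset.card_nsmul_le_sum x.coeff.support (fun a => (x.coeff a)^2) 1
          (fun a ha => by
            have hne := Finsupp.mem_support_iff.mp ha
            show 1 ≤ (x.coeff a)^2
            rcases hne.lt_or_gt with h' | h' <;> nlinarith)
        simpa using this
      omega
    have hne : x.coeff.support.card ≠ 0 := by
      intro hc
      rw [Finset.card_eq_zero, Finsupp.support_eq_empty, MonoidAlgebra.coeff_eq_zero] at hc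
      rw [hc, zero_mul] at h
      exact one_ne_zero h.symm
    have hcard1 : x.coeff.support.card = 1 := by omega
    obtain ⟨g, hg⟩ := Finset.card_eq_one.mp hcard1
    obtain ⟨hg0, hx⟩ := Finsupp.support_eq_singleton.mp hg
    have hsq : (x.coeff g)^2 = 1 := by rw [hg, Finset.sum_singleton] at h1; exact h1
    have : x.coeff g = 1 ∨ x.coeff g = -1 := by
      rcases Int.isUnit_iff.mp (IsUnit.of_mul_eq_one (a := x.coeff g) (x.coeff g) (by nlinarith)) with h' | h'
      · exact Or.inl h'
      · exact Or.inr h'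
    refine ⟨g, ?_⟩
    rcases this with h' | h'
    · left; apply MonoidAlgebra.coeff_injective; rw [hx, h']; rfl
    · right; apply MonoidAlgebra.coeff_injective; rw [hx, h']
      show Finsupp.single g (-1) = -Finsupp.single g 1
      simp
  · rintro ⟨g, h | h⟩ <;> subst h
    · show MonoidAlgebra.single g 1 * conjM π (MonoidAlgebra.single g 1) = 1
      have : conjM π (MonoidAlgebra.single g 1) = MonoidAlgebra.single g⁻¹ 1 := by
        show MonoidAlgebra.mapDomain _ _ = _
        rw [MonoidAlgebra.mapDomain_single]
        rfl
      rw [this, MonoidAlgebra.single_mul_single]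
      simp [MonoidAlgebra.one_def]
    · rw [map_neg, neg_mul_neg]
      show MonoidAlgebra.single g 1 * conjM π (MonoidAlgebra.single g 1) = 1
      have : conjM π (MonoidAlgebra.single g 1) = MonoidAlgebra.single g⁻¹ 1 := by
        show MonoidAlgebra.mapDomain _ _ = _
        rw [MonoidAlgebra.mapDomain_single]
        rfl
      rw [this, MonoidAlgebra.single_mul_single]
      simp [MonoidAlgebra.one_def]
end

section
/- Let y₁, y₂ be coprime integers and q = y₁·y₂. On ℤ² consider the hyperbolic quadratic form θ(a,b) = a·b and its symmetrization λ((a,b),(c,d)) = a·d + b·c. Then: (i) the subgroup ℤ·(y₁,y₂) is a direct summand of ℤ² and θ(y₁,y₂) = q; (ii) the subgroup ℤ·(−y₁,y₂) is a direct summand of ℤ² and θ(−y₁,y₂) = −q; (iii) {x ∈ ℤ² : λ(x,(y₁,y₂)) = 0} = ℤ·(−y₁,y₂). Hence the pair of inclusions (ℤ,q) ↪ H₊(ℤ) ↩ (ℤ,−q) given by (y₁,y₂) and (−y₁,y₂) is a 2-sided primitive embedding. (Example 5.3, existence part.) -/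
lemma compl_of_unimodular (u v : Fin 2 → ℤ) (h : u 0 * v 1 - u 1 * v 0 = 1) :
    IsCompl (Submodule.span ℤ {u}) (Submodule.span ℤ {v}) := by
  constructor
  · rw [Submodule.disjoint_def]
    intro x hx hx'
    obtain ⟨s, rfl⟩ := Submodule.mem_span_singleton.mp hx
    obtain ⟨t, ht⟩ := Submodule.mem_span_singleton.mp hx'
    have h0 := congrFun ht 0
    have h1 := congrFun ht 1
    simp only [Pi.smul_apply, smul_eq_mul] at h0 h1
    have hs : s = 0 := by linear_combination (-s) * h - v 1 * h0 + v 0 * h1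
    simp [hs]
  · rw [codisjoint_iff, eq_top_iff]
    intro x _
    rw [Submodule.mem_sup]
    refine ⟨(x 0 * v 1 - x 1 * v 0) • u,
      Submodule.smul_mem _ _ (Submodule.mem_span_singleton_self u),
      (u 0 * x 1 - u 1 * x 0) • v,
      Submodule.smul_mem _ _ (Submodule.mem_span_singleton_self v), ?_⟩
    funext i
    fin_cases i
    · simp only [Fin.zero_eta, Pi.add_apply, Pi.smul_apply, smul_eq_mul]
      linear_combination x 0 * h
    · simp only [Fin.mk_one, Pi.add_apply, Pi.smul_apply, smul_eq_mul]
      linear_combination x 1 * h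

/- STATEMENT 6 (Example 5.3, existence part): for q = y₁y₂ with y₁, y₂ coprime, the
inclusions given by (y₁,y₂) and (−y₁,y₂) form a 2-sided primitive embedding
(ℤ,q) ↪ H₊(ℤ) ↩ (ℤ,−q): each span is a direct summand of ℤ², the hyperbolic quadratic
form θ(a,b) = ab takes values q and −q on the two vectors, and the λ-orthogonal
complement of (y₁,y₂) is exactly ℤ·(−y₁,y₂). -/

theorem stmt6 (y₁ y₂ : ℤ) (hco : IsCoprime y₁ y₂) (q : ℤ) (hq : q = y₁ * y₂) :
    (∃ c : Submodule ℤ (Fin 2 → ℤ),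
        IsCompl (Submodule.span ℤ {(![y₁, y₂] : Fin 2 → ℤ)}) c) ∧
    (![y₁, y₂] : Fin 2 → ℤ) 0 * (![y₁, y₂] : Fin 2 → ℤ) 1 = q ∧
    (∃ c : Submodule ℤ (Fin 2 → ℤ),
        IsCompl (Submodule.span ℤ {(![-y₁, y₂] : Fin 2 → ℤ)}) c) ∧
    (![-y₁, y₂] : Fin 2 → ℤ) 0 * (![-y₁, y₂] : Fin 2 → ℤ) 1 = -q ∧
    {x : Fin 2 → ℤ | x 0 * y₂ + x 1 * y₁ = 0} =
      (Submodule.span ℤ {(![-y₁, y₂] : Fin 2 → ℤ)} : Set (Fin 2 → ℤ)) := by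
  obtain ⟨a, b, hab⟩ := hco
  refine ⟨⟨Submodule.span ℤ {(![-b, a] : Fin 2 → ℤ)}, ?_⟩, by simp [hq],
    ⟨Submodule.span ℤ {(![-b, -a] : Fin 2 → ℤ)}, ?_⟩, by simp [hq], ?_⟩
  · apply compl_of_unimodular
    simp only [Matrix.cons_val_zero, Matrix.cons_val_one, Matrix.head_cons]
    linear_combination hab
  · apply compl_of_unimodular
    simp only [Matrix.cons_val_zero, Matrix.cons_val_one, Matrix.head_cons]
    linear_combination hab
  · ext x
    simp only [Set.mem_setOf_eq, SetLike.mem_coe, Submodule.mem_span_singleton]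
    constructor
    · intro hx
      refine ⟨b * x 1 - a * x 0, ?_⟩
      funext i
      fin_cases i
      · simp only [Fin.zero_eta, Pi.smul_apply, smul_eq_mul, Matrix.cons_val_zero]
        linear_combination x 0 * hab - b * hx
      · simp only [Fin.mk_one, Pi.smul_apply, smul_eq_mul, Matrix.cons_val_one,
          Matrix.head_cons, Matrix.cons_val_zero]
        linear_combination x 1 * hab - a * hx
    · rintro ⟨t, rfl⟩
      simp only [Pi.smul_apply, smul_eq_mul, Matrix.cons_val_zero,
        Matrix.cons_val_one, Matrix.head_cons]
      ring
end

section
/- Let q ∈ ℤ and let v = (v₁,v₂) and w be elements of ℤ² such that: ℤ·v is a direct summand of ℤ², v₁·v₂ = q, and ℤ·w = {x ∈ ℤ² : λ(x,v) = 0}, where λ((a,b),(c,d)) = a·d + b·c. Then v₁ and v₂ are coprime, and w = (−v₁, v₂) or w = (v₁, −v₂). Consequently every 2-sided primitive embedding (ℤ,q) ↪ H₊(ℤ) ↩ (ℤ,−q) is, up to sign, of the form (i_{y₁,y₂}, ±j_{y₁,y₂}) with i_{y₁,y₂} = (y₁,y₂) and j_{y₁,y₂} = (−y₁,y₂) for some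 coprime factorization q = y₁y₂. (Example 5.3, classification part.) -/
/- STATEMENT 7 (Example 5.3, classification part): if ℤ·v is a direct summand of ℤ² with
θ(v) = v₁v₂ = q, and ℤ·w is exactly the λ-orthogonal complement of v (where
λ((a,b),(c,d)) = ad + bc), then v₁ and v₂ are coprime and w = (−v₁,v₂) or w = (v₁,−v₂).
Hence every 2-sided primitive embedding (ℤ,q) ↪ H₊(ℤ) ↩ (ℤ,−q) is, up to sign, of the
form (i_{y₁,y₂}, ±j_{y₁,y₂}) for some coprime factorization q = y₁y₂. -/

theorem stmt7 (q : ℤ) (v w : Fin 2 → ℤ)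
    (hsummand : ∃ c : Submodule ℤ (Fin 2 → ℤ), IsCompl (Submodule.span ℤ {v}) c)
    (hq : v 0 * v 1 = q)
    (hw : (Submodule.span ℤ {w} : Set (Fin 2 → ℤ)) =
      {x : Fin 2 → ℤ | x 0 * v 1 + x 1 * v 0 = 0}) :
    IsCoprime (v 0) (v 1) ∧ (w = ![-(v 0), v 1] ∨ w = ![v 0, -(v 1)]) := by
  classical
  have hwmem : w 0 * v 1 + w 1 * v 0 = 0 := by
    have h : w ∈ (Submodule.span ℤ {w} : Set (Fin 2 → ℤ)) :=
      Submodule.mem_span_singleton_self w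
    rw [hw] at h; exact h
  -- v ≠ 0
  have hvne : v ≠ 0 := by
    rintro rfl
    have h0 : (![1,0] : Fin 2 → ℤ) ∈ (Submodule.span ℤ {w} : Set (Fin 2 → ℤ)) := by
      rw [hw]; simp
    have h1 : (![0,1] : Fin 2 → ℤ) ∈ (Submodule.span ℤ {w} : Set (Fin 2 → ℤ)) := by
      rw [hw]; simp
    obtain ⟨a, ha⟩ := Submodule.mem_span_singleton.mp h0
    obtain ⟨b, hb⟩ := Submodule.mem_span_singleton.mp h1
    have ha0 : a * w 0 = 1 := by have := congrFun ha 0; simpa using this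
    have ha1 : a * w 1 = 0 := by have := congrFun ha 1; simpa using this
    have hb1 : b * w 1 = 1 := by have := congrFun hb 1; simpa using this
    rcases mul_eq_zero.mp ha1 with h | h
    · rw [h, zero_mul] at ha0; exact one_ne_zero ha0.symm
    · rw [h, mul_zero] at hb1; exact one_ne_zero hb1.symm
  -- coprimality from the direct summand condition
  obtain ⟨c, hc⟩ := hsummand
  set p := Submodule.span ℤ {v} with hp
  have hv0 : v ∈ p := Submodule.mem_span_singleton_self v
  let π := Submodule.linearProjOfIsCompl p c hc
  obtain ⟨c0, hc0⟩ := Submodule.mem_span_singleton.mp (π ![1,0]).2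
  obtain ⟨c1, hc1⟩ := Submodule.mem_span_singleton.mp (π ![0,1]).2
  have hvdec : v = v 0 • ![1,0] + v 1 • ![0,1] := by
    funext i; fin_cases i <;> simp
  have hπv : (π v : Fin 2 → ℤ) = v := by
    have := Submodule.linearProjOfIsCompl_apply_left hc ⟨v, hv0⟩
    exact congrArg Subtype.val this
  have key : v = (v 0 * c0 + v 1 * c1) • v := by
    conv_lhs => rw [← hπv, hvdec]
    rw [map_add, map_smul, map_smul]
    push_cast
    rw [← hc0, ← hc1, smul_smul, smul_smul, ← add_smul]
  have hone : v 0 * c0 + v 1 * c1 = 1 := by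
    by_contra hne
    have : (v 0 * c0 + v 1 * c1 - 1) • v = 0 := by
      rw [sub_smul, one_smul, ← key, sub_self]
    rcases smul_eq_zero.mp this with h | h
    · exact hne (by linarith [sub_eq_zero.mp h])
    · exact hvne h
  have hcop : IsCoprime (v 0) (v 1) := ⟨c0, c1, by linarith [hone]⟩
  refine ⟨hcop, ?_⟩
  -- the orthogonal complement is spanned by u = ![-(v 0), v 1]
  set u : Fin 2 → ℤ := ![-(v 0), v 1] with hu
  have hS : (Submodule.span ℤ {u} : Set (Fin 2 → ℤ)) =
      {x : Fin 2 → ℤ | x 0 * v 1 + x 1 * v 0 = 0} := by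
    ext x
    simp only [SetLike.mem_coe, Submodule.mem_span_singleton, Set.mem_setOf_eq]
    constructor
    · rintro ⟨k, rfl⟩
      simp [hu]; ring
    · intro hx
      refine ⟨c0 * (-(x 0)) + c1 * (x 1), ?_⟩
      funext i; fin_cases i
      · show (c0 * (-(x 0)) + c1 * (x 1)) * (-(v 0)) = x 0
        linear_combination x 0 * hone - c1 * hx
      · show (c0 * (-(x 0)) + c1 * (x 1)) * (v 1) = x 1
        linear_combination x 1 * hone - c0 * hx
  have hspan : Submodule.span ℤ {w} = Submodule.span ℤ {u} :=
    SetLike.coe_injective (hw.trans hS.symm)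
  obtain ⟨z, hz⟩ := Submodule.span_singleton_eq_span_singleton.mp hspan
  rcases Int.units_eq_one_or z with rfl | rfl
  · left
    rw [← hz]; simp
  · right
    funext i
    have h := congrFun hz i
    fin_cases i <;> simp [hu] at h ⊢ <;> linarith
end

section
/- Let Λ = ℤ[t,t⁻¹] with the involution x ↦ x̄ induced by t ↦ t⁻¹. Fix p ∈ ℤ, q = 1 − 4p², n ∈ ℤ, and write g = tⁿ. Set v = (1 + 2p·g⁻¹, p − 2p²·g⁻¹) and w = (1 + 2p·g, −p + 2p²·g) in Λ². Then: (i) the matrix u_g = [[1+2pg⁻¹, g⁻¹],[p−2p²g⁻¹, 1−pg⁻¹]] ∈ M₂(Λ) has determinant 1 and its first column is v; (ii) u_g·(q + 2p·g, −2pq)ᵀ = w; (iii) there exist c, d ∈ Λ with v̄₁·v₂ = pq + (c − c̄) and w̄₁·w₂ = −pq + (d − d̄), i.e., v and w have hyperbolic quadratic values pq and −pq; (iv) v̄₁·w₂ + v̄₂·w₁ = 0; (v) {x ∈ Λ² : x̄₁·v₂ + x̄₂·v₁ = 0} = Λ·w. Hence (v, w) is a 2-sided primitive embedding of the quadratic forms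 ((Λ, pq), (Λ, −pq)) into the hyperbolic form H₊(Λ). (Example ex:M_iPE.) -/
/- STATEMENT 8 (Example ex:M_iPE): over Λ = ℤ[t,t⁻¹], with g = tⁿ, q = 1 − 4p²,
v = (1 + 2p·g⁻¹, p − 2p²·g⁻¹) and w = (1 + 2p·g, −p + 2p²·g) form a 2-sided primitive
embedding of ((Λ,pq),(Λ,−pq)) into the hyperbolic form H₊(Λ):
(i) u_g has determinant 1 and first column v; (ii) u_g·(q + 2p·g, −2pq)ᵀ = w;
(iii) the hyperbolic quadratic values of v and w are pq and −pq; (iv) v ⟂ w;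
(v) the orthogonal complement of v is exactly Λ·w. -/

open LaurentPolynomial Matrix

lemma conjL_apply_s8 (x : Lam) : conjL x = invert x := rfl

lemma invert_invert (x : Lam) : invert (invert x) = x := involutive_invert x

theorem stmt8 (p n : ℤ) (v w : Fin 2 → Lam) (ug : Matrix (Fin 2) (Fin 2) Lam)
    (hv : v = ![1 + C (2 * p) * T (-n), C p - C (2 * p ^ 2) * T (-n)])
    (hw : w = ![1 + C (2 * p) * T n, -C p + C (2 * p ^ 2) * T n])
    (hu : ug = !![1 + C (2 * p) * T (-n), T (-n);
                  C p - C (2 * p ^ 2) * T (-n), 1 - C p * T (-n)]) :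
    -- (i)
    (ug.det = 1 ∧ ∀ i, ug i 0 = v i) ∧
    -- (ii)
    ug.mulVec ![C (1 - 4 * p ^ 2) + C (2 * p) * T n, C (-(2 * p * (1 - 4 * p ^ 2)))] = w ∧
    -- (iii)
    (∃ c : Lam, conjL (v 0) * v 1 = C (p * (1 - 4 * p ^ 2)) + (c - conjL c)) ∧
    (∃ d : Lam, conjL (w 0) * w 1 = C (-(p * (1 - 4 * p ^ 2))) + (d - conjL d)) ∧
    -- (iv)
    conjL (v 0) * w 1 + conjL (v 1) * w 0 = 0 ∧
    -- (v)
    {x : Fin 2 → Lam | conjL (x 0) * v 1 + conjL (x 1) * v 0 = 0} =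
      {x : Fin 2 → Lam | ∃ c : Lam, x = c • w} := by
  subst hv hw hu
  have hab : (T n : Lam) * T (-n) = 1 := by rw [← T_add]; simp
  refine ⟨⟨?_, ?_⟩, ?_, ⟨C (2 * p ^ 2) * T n, ?_⟩, ⟨C (2 * p ^ 2) * T n, ?_⟩, ?_, ?_⟩
  · rw [Matrix.det_fin_two_of]
    simp only [_root_.map_add, _root_.map_sub, _root_.map_mul, _root_.map_one,
      _root_.map_pow, _root_.map_neg, _root_.map_ofNat]
    ring
  · intro i; fin_cases i <;> rfl
  · funext i
    fin_cases i <;>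
      simp only [Matrix.mulVec, dotProduct, Fin.sum_univ_two, Fin.zero_eta, Fin.mk_one,
        Fin.isValue, Matrix.cons_val_zero, Matrix.cons_val_one, Matrix.head_cons,
        Matrix.of_apply, Matrix.cons_val', Matrix.head_fin_const, Matrix.empty_val',
        Matrix.cons_val_fin_one] <;>
      simp only [_root_.map_add, _root_.map_sub, _root_.map_mul, _root_.map_one,
        _root_.map_pow, _root_.map_neg, _root_.map_ofNat]
    · linear_combination (4 * C p ^ 2 : Lam) * hab
    · linear_combination (-4 * C p ^ 3 : Lam) * hab
  · simp only [Matrix.cons_val_zero, Matrix.cons_val_one, Matrix.head_cons, conjL_apply_s8,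
      _root_.map_add, _root_.map_sub, _root_.map_mul, _root_.map_one, _root_.map_pow,
      _root_.map_neg, _root_.map_ofNat, invert_C, invert_T, neg_neg]
    linear_combination (-4 * C p ^ 3 : Lam) * hab
  · simp only [Matrix.cons_val_zero, Matrix.cons_val_one, Matrix.head_cons, conjL_apply_s8,
      _root_.map_add, _root_.map_sub, _root_.map_mul, _root_.map_one, _root_.map_pow,
      _root_.map_neg, _root_.map_ofNat, invert_C, invert_T, neg_neg]
    linear_combination (4 * C p ^ 3 : Lam) * hab
  · simp only [Matrix.cons_val_zero, Matrix.cons_val_one, Matrix.head_cons, conjL_apply_s8,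
      _root_.map_add, _root_.map_sub, _root_.map_mul, _root_.map_one, _root_.map_pow,
      _root_.map_neg, _root_.map_ofNat, invert_C, invert_T, neg_neg]
    ring
  · ext x
    simp only [Set.mem_setOf_eq, Matrix.cons_val_zero, Matrix.cons_val_one, Matrix.head_cons]
    constructor
    · intro h
      have h2 := congrArg conjL h
      simp only [conjL_apply_s8, _root_.map_add, _root_.map_sub, _root_.map_mul, _root_.map_one,
        _root_.map_pow, _root_.map_neg, _root_.map_zero, _root_.map_ofNat, invert_C, invert_T,
        neg_neg, invert_invert] at h2
      refine ⟨(1 - C p * T n) * x 0 + T n * x 1, ?_⟩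
      funext i
      fin_cases i <;>
        simp only [Pi.smul_apply, smul_eq_mul, Fin.zero_eta, Fin.mk_one, Fin.isValue,
          Matrix.cons_val_zero, Matrix.cons_val_one, Matrix.head_cons] <;>
        simp only [_root_.map_add, _root_.map_sub, _root_.map_mul, _root_.map_one,
          _root_.map_pow, _root_.map_neg, _root_.map_ofNat]
      · linear_combination (-(T n) : Lam) * h2
      · linear_combination ((1 - C p * T n) : Lam) * h2
    · rintro ⟨c, rfl⟩
      simp only [Pi.smul_apply, smul_eq_mul, Matrix.cons_val_zero, Matrix.cons_val_one,
        Matrix.head_cons, conjL_apply_s8, _root_.map_add, _root_.map_sub, _root_.map_mul,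
        _root_.map_one, _root_.map_pow, _root_.map_neg, _root_.map_ofNat, invert_C, invert_T,
        neg_neg]
      ring
end

section
/- Let R be a commutative ring with involution r ↦ r̄, let ε = 1 or ε = −1, and let n, m ≥ 0. Let ψ be an (n+m)×(n+m) matrix over R and set φ = ψ + ε·ψᴴ. Suppose given matrices J of size (n+m)×n, I of size (n+m)×m, Σ of size (n+m)×m and T of size n×(n+m) satisfying: Iᴴ·φ·J = 0, Iᴴ·φ·Σ = 1ₘ, T·J = 1ₙ, and J·T = 1₍ₙ₊ₘ₎ − Σ·Iᴴ·φ. Define θ = Jᴴ·ψ·J, λ = Jᴴ·φ·J, θ' = −Iᴴ·ψ·I, λ' = −Iᴴ·φ·I, A = −Σᴴ·φᴴ·J, B = −T·I, S = −Σᴴ·ψ·Σ. Then: (i) A·B + (Sᴴ + εS)·λ' = 1ₘ; (ii) Aᴴ·λ' = λ·B; (iii) there exists an m×m matrix X over R with θ' = Bᴴ·θ·B + λ'ᴴ·S·λ' + (X − εXᴴ). (Proposition 4.7: the components a = −σ*φ*j, b = −σ̃j⊥, s = −σ*ψσ of the stable isomorphism f_j associated to a split isometric injection j : (V,θ) ↪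 (M,ψ) satisfy the conditions of Lemma 4.3 for the forms (V,θ) and (V⊥, −θ⊥).) -/
/- STATEMENT 9 (Proposition 4.7): over a commutative ring R with involution, given the
data of a split isometric injection J with orthogonal complement I, splitting Σ of Iᴴφ
and splitting T of J, the components A = −Σᴴφᴴ J, B = −T I, S = −Σᴴψ Σ satisfy the
conditions of Lemma 4.3 for the forms (V,θ) and (V⊥,−θ⊥). -/

open Matrix

theorem stmt9 (R : Type*) [CommRing R] [StarRing R] (ε : R) (hε : ε = 1 ∨ ε = -1)
    (n m : ℕ)
    (ψ : Matrix (Fin (n + m)) (Fin (n + m)) R)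
    (J : Matrix (Fin (n + m)) (Fin n) R)
    (I : Matrix (Fin (n + m)) (Fin m) R)
    (Sig : Matrix (Fin (n + m)) (Fin m) R)
    (T : Matrix (Fin n) (Fin (n + m)) R)
    (φ : Matrix (Fin (n + m)) (Fin (n + m)) R) (hφ : φ = ψ + ε • ψᴴ)
    (h1 : Iᴴ * φ * J = 0)
    (h2 : Iᴴ * φ * Sig = 1)
    (h3 : T * J = 1)
    (h4 : J * T = 1 - Sig * Iᴴ * φ)
    (θ : Matrix (Fin n) (Fin n) R) (hθ : θ = Jᴴ * ψ * J)
    (lam : Matrix (Fin n) (Fin n) R) (hlam : lam = Jᴴ * φ * J)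
    (θ' : Matrix (Fin m) (Fin m) R) (hθ' : θ' = -(Iᴴ * ψ * I))
    (lam' : Matrix (Fin m) (Fin m) R) (hlam' : lam' = -(Iᴴ * φ * I))
    (A : Matrix (Fin m) (Fin n) R) (hA : A = -(Sigᴴ * φᴴ * J))
    (B : Matrix (Fin n) (Fin m) R) (hB : B = -(T * I))
    (S : Matrix (Fin m) (Fin m) R) (hS : S = -(Sigᴴ * ψ * Sig)) :
    A * B + (Sᴴ + ε • S) * lam' = 1 ∧
    Aᴴ * lam' = lam * B ∧
    ∃ X : Matrix (Fin m) (Fin m) R,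
      θ' = Bᴴ * θ * B + lam'ᴴ * S * lam' + (X - ε • Xᴴ) := by
  have hstar : (star ε : R) = ε := by rcases hε with h | h <;> simp [h]
  have hε2 : ε * ε = 1 := by rcases hε with h | h <;> subst h <;> ring
  have hcancel : ∀ {p q : ℕ} (M : Matrix (Fin p) (Fin q) R), ε • ε • M = M := by
    intro p q M; rw [smul_smul, hε2, one_smul]
  have hφH : φᴴ = ε • φ := by
    rw [hφ]
    simp only [conjTranspose_add, conjTranspose_smul, hstar, conjTranspose_conjTranspose,
      smul_add, smul_smul, hε2, one_smul]
    abel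
  -- right-associated versions of hypotheses
  have e1 : Iᴴ * (φ * J) = 0 := by simpa [Matrix.mul_assoc] using h1
  have e2 : Iᴴ * (φ * Sig) = 1 := by simpa [Matrix.mul_assoc] using h2
  have e4 : J * T = 1 - Sig * (Iᴴ * φ) := by simpa [Matrix.mul_assoc] using h4
  -- conjugate transposed versions
  have eH1 : Jᴴ * (φᴴ * I) = 0 := by
    have := congrArg conjTranspose e1
    simpa [conjTranspose_mul, Matrix.mul_assoc] using this
  have eH2 : Sigᴴ * (φᴴ * I) = 1 := by
    have := congrArg conjTranspose e2
    simpa [conjTranspose_mul, Matrix.mul_assoc] using this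
  have eJ : Jᴴ * (φ * I) = 0 := by
    have h : ε • (Jᴴ * (φ * I)) = 0 := by
      have := eH1
      rw [hφH] at this
      simpa [smul_mul_assoc, mul_smul_comm] using this
    calc Jᴴ * (φ * I) = ε • ε • (Jᴴ * (φ * I)) := (hcancel _).symm
      _ = ε • (0 : Matrix (Fin n) (Fin m) R) := by rw [h]
      _ = 0 := smul_zero ε
  have hJTI : J * (T * I) = I - Sig * (Iᴴ * (φ * I)) := by
    calc J * (T * I) = (J * T) * I := by rw [Matrix.mul_assoc]
      _ = (1 - Sig * (Iᴴ * φ)) * I := by rw [e4]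
      _ = I - Sig * (Iᴴ * (φ * I)) := by
          simp [Matrix.sub_mul, Matrix.mul_assoc]
  have hSig' : Sig * (Iᴴ * (φ * I)) = I - J * (T * I) := by
    rw [hJTI]; abel
  have hQ : φ * (I * Sigᴴ) = ε • (1 - Tᴴ * Jᴴ) := by
    have h : Tᴴ * Jᴴ = 1 - φᴴ * (I * Sigᴴ) := by
      have := congrArg conjTranspose e4
      simpa [conjTranspose_mul, Matrix.mul_assoc] using this
    have h' : φᴴ * (I * Sigᴴ) = 1 - Tᴴ * Jᴴ := by rw [h]; abel
    rw [hφH, smul_mul_assoc] at h'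
    calc φ * (I * Sigᴴ) = ε • ε • (φ * (I * Sigᴴ)) := (hcancel _).symm
      _ = ε • (1 - Tᴴ * Jᴴ) := by rw [h']
  -- Part (i)
  have hSsym : Sᴴ + ε • S = -(Sigᴴ * (φᴴ * Sig)) := by
    rw [hS, hφ]
    simp only [conjTranspose_neg, conjTranspose_mul, conjTranspose_conjTranspose,
      conjTranspose_add, conjTranspose_smul, hstar, Matrix.add_mul, Matrix.mul_add,
      Matrix.mul_assoc, smul_neg, mul_smul_comm, smul_mul_assoc, neg_add]
    simp only [Matrix.smul_mul, Matrix.mul_smul]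
  have goal1 : A * B + (Sᴴ + ε • S) * lam' = 1 := by
    rw [hA, hB, hSsym, hlam']
    simp only [Matrix.neg_mul, Matrix.mul_neg, neg_neg, Matrix.mul_assoc]
    have key : Sigᴴ * (φᴴ * (J * (T * I)))
        = Sigᴴ * (φᴴ * I) - Sigᴴ * (φᴴ * (Sig * (Iᴴ * (φ * I)))) := by
      rw [hJTI]
      simp [Matrix.mul_sub]
    rw [key, eH2]
    abel
  -- Part (ii)
  have hAH : Aᴴ = -(Jᴴ * (φ * Sig)) := by
    rw [hA]
    simp [conjTranspose_mul, Matrix.mul_assoc]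
  have goal2 : Aᴴ * lam' = lam * B := by
    rw [hAH, hlam', hlam, hB]
    simp only [Matrix.neg_mul, Matrix.mul_neg, neg_neg, Matrix.mul_assoc]
    rw [show Sig * (Iᴴ * (φ * I)) = I - J * (T * I) from hSig']
    rw [Matrix.mul_sub, Matrix.mul_sub, eJ]
    abel
  -- Part (iii)
  have hlam'H : lam'ᴴ = -(ε • (Iᴴ * (φ * I))) := by
    rw [hlam']
    simp [conjTranspose_mul, hφH, Matrix.mul_assoc, mul_smul_comm, smul_mul_assoc]
  have hM1 : Bᴴ * θ * B = Iᴴ * (Tᴴ * (Jᴴ * (ψ * (J * (T * I))))) := by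
    rw [hB, hθ]
    simp [conjTranspose_mul, Matrix.mul_assoc]
  have hLH : ∀ Z : Matrix (Fin (n + m)) (Fin m) R,
      lam'ᴴ * (Sigᴴ * Z) = -(Iᴴ * Z) + Iᴴ * (Tᴴ * (Jᴴ * Z)) := by
    intro Z
    rw [hlam'H]
    calc -(ε • (Iᴴ * (φ * I))) * (Sigᴴ * Z)
        = -(ε • (Iᴴ * ((φ * (I * Sigᴴ)) * Z))) := by
          simp [smul_mul_assoc, Matrix.mul_assoc]
      _ = -(ε • (Iᴴ * ((ε • (1 - Tᴴ * Jᴴ)) * Z))) := by rw [hQ]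
      _ = -(ε • ε • (Iᴴ * (Z - Tᴴ * (Jᴴ * Z)))) := by
          simp [smul_mul_assoc, mul_smul_comm, Matrix.sub_mul, Matrix.mul_sub,
            Matrix.mul_assoc]
      _ = -(Iᴴ * Z - Iᴴ * (Tᴴ * (Jᴴ * Z))) := by
          rw [hcancel]; rw [Matrix.mul_sub]
      _ = -(Iᴴ * Z) + Iᴴ * (Tᴴ * (Jᴴ * Z)) := by abel
  have hM2 : lam'ᴴ * S * lam'
      = -(Iᴴ * (ψ * I)) + Iᴴ * (ψ * (J * (T * I)))
        + (Iᴴ * (Tᴴ * (Jᴴ * (ψ * I))) - Iᴴ * (Tᴴ * (Jᴴ * (ψ * (J * (T * I)))))) := by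
    have hSl : S * lam' = Sigᴴ * (ψ * I - ψ * (J * (T * I))) := by
      rw [hS, hlam']
      simp only [Matrix.neg_mul, Matrix.mul_neg, neg_neg, Matrix.mul_assoc]
      rw [hSig']
      simp [Matrix.mul_sub]
    rw [Matrix.mul_assoc, hSl, hLH]
    simp only [Matrix.mul_sub]
    abel
  have kψ : Jᴴ * (ψ * I) = -(ε • (Jᴴ * (ψᴴ * I))) := by
    have h := eJ
    rw [hφ] at h
    have h' : Jᴴ * (ψ * I) + ε • (Jᴴ * (ψᴴ * I)) = 0 := by
      simpa [Matrix.add_mul, Matrix.mul_add, smul_mul_assoc, mul_smul_comm] using h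
    exact eq_neg_of_add_eq_zero_left h'
  have k4 : Iᴴ * (Tᴴ * (Jᴴ * (ψ * I))) = -(ε • (Iᴴ * (Tᴴ * (Jᴴ * (ψᴴ * I))))) := by
    rw [kψ]
    simp [mul_smul_comm]
  have hXH : (-(Iᴴ * (ψ * (J * (T * I)))))ᴴ = -(Iᴴ * (Tᴴ * (Jᴴ * (ψᴴ * I)))) := by
    simp [conjTranspose_mul, Matrix.mul_assoc]
  refine ⟨goal1, goal2, -(Iᴴ * (ψ * (J * (T * I)))), ?_⟩
  rw [hM1, hM2, hθ', hXH, k4]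
  simp only [smul_neg, neg_neg, Matrix.mul_assoc]
  abel
end

section
/- Let R be a commutative ring with involution r ↦ r̄, ε = 1 or ε = −1, and n, m ≥ 0. Let θ be an n×n matrix and θ' an m×m matrix over R; set λ = θ + εθᴴ and λ' = θ' + εθ'ᴴ. Suppose matrices A (m×n), B (n×m), S (m×m) satisfy: A·B + (Sᴴ + εS)·λ' = 1ₘ, Aᴴ·λ' = λ·B, and θ' = Bᴴ·θ·B + λ'ᴴ·S·λ' + (X₀ − εX₀ᴴ) for some X₀. Let Ψ be the (n+m)×(n+m) block matrix [[θ, 0],[εA, −S]] (the union form (V,θ) ∪_f (V',−θ')) and Φ = Ψ + εΨᴴ. Let J = [1ₙ; 0] and J' = [B; −λ'] be the block column matrices of sizes (n+m)×n and (n+m)×m. Then: (i) Jᴴ·Ψ·J = θ; (ii) there exists Y with J'ᴴ·Ψ·J' = −θ' + (Y − εYᴴ); (iii) the matrix [A, −(Sᴴ+εS)] is a left inverse of J', so J' is a split injection; (iv) Φ·J' = ε·[0; 1ₘ], and consequently, if Φ is invertible, then {x ∈ R^{n+m} : Jᴴ·Φ·x = 0} equals the image of J'. (Lemma 5.12: the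 canonical maps j_f = (1,0)ᵀ and j'_f = (b,−λ')ᵀ are split isometric injections of (V,θ) and (V',−θ') into the union, with complementary images.) -/
/- STATEMENT 10 (Lemma 5.12): given matrices (A,B,S) satisfying the conditions of
Lemma 4.3 relating ε-quadratic forms θ (n×n) and θ' (m×m), the block matrix
Ψ = [[θ,0],[εA,−S]] is the union form, and the block columns J = [1;0], J' = [B;−λ']
are split isometric injections of (V,θ) and (V',−θ') into it with complementary images. -/

open Matrix

set_option linter.unusedSectionVars false

section aux
variable {R : Type*} [CommRing R] {k l p q r : Type*} [Fintype l]

lemma aux_subsub (M : Matrix k l R) (f : q → k) (N : Matrix l p R) (g : r → p) :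
    M.submatrix f id * N.submatrix id g = (M * N).submatrix f g := by
  ext i j
  simp [Matrix.mul_apply]

lemma aux_mulsub (M : Matrix k l R) (N : Matrix l p R) (g : r → p) :
    M * N.submatrix id g = (M * N).submatrix id g := by
  ext i j
  simp [Matrix.mul_apply]

lemma aux_b11 {k' l' : Type*} (P : Matrix k l R) (Q : Matrix k l' R) (U : Matrix k' l R)
    (V : Matrix k' l' R) : (fromBlocks P Q U V).submatrix Sum.inl Sum.inl = P := by
  ext i j; simp

lemma aux_b12 {k' l' : Type*} (P : Matrix k l R) (Q : Matrix k l' R) (U : Matrix k' l R)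
    (V : Matrix k' l' R) : (fromBlocks P Q U V).submatrix Sum.inl Sum.inr = Q := by
  ext i j; simp

end aux

theorem stmt10 (R : Type*) [CommRing R] [StarRing R] (ε : R) (hε : ε = 1 ∨ ε = -1)
    (n m : ℕ)
    (θ : Matrix (Fin n) (Fin n) R) (θ' : Matrix (Fin m) (Fin m) R)
    (lam : Matrix (Fin n) (Fin n) R) (hlam : lam = θ + ε • θᴴ)
    (lam' : Matrix (Fin m) (Fin m) R) (hlam' : lam' = θ' + ε • θ'ᴴ)
    (A : Matrix (Fin m) (Fin n) R) (B : Matrix (Fin n) (Fin m) R)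
    (S : Matrix (Fin m) (Fin m) R) (X₀ : Matrix (Fin m) (Fin m) R)
    (h1 : A * B + (Sᴴ + ε • S) * lam' = 1)
    (h2 : Aᴴ * lam' = lam * B)
    (h3 : θ' = Bᴴ * θ * B + lam'ᴴ * S * lam' + (X₀ - ε • X₀ᴴ))
    (Ψ : Matrix (Fin n ⊕ Fin m) (Fin n ⊕ Fin m) R)
    (hΨ : Ψ = Matrix.fromBlocks θ 0 (ε • A) (-S))
    (Φ : Matrix (Fin n ⊕ Fin m) (Fin n ⊕ Fin m) R) (hΦ : Φ = Ψ + ε • Ψᴴ)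
    (J : Matrix (Fin n ⊕ Fin m) (Fin n) R)
    (hJ : J = Matrix.of fun i j =>
      Sum.elim (fun i' => (1 : Matrix (Fin n) (Fin n) R) i' j) (fun _ => 0) i)
    (J' : Matrix (Fin n ⊕ Fin m) (Fin m) R)
    (hJ' : J' = Matrix.of fun i j => Sum.elim (fun i' => B i' j) (fun i' => (-lam') i' j) i) :
    -- (i)
    Jᴴ * Ψ * J = θ ∧
    -- (ii)
    (∃ Y : Matrix (Fin m) (Fin m) R, J'ᴴ * Ψ * J' = -θ' + (Y - ε • Yᴴ)) ∧
    -- (iii) the matrix [A, −(Sᴴ+εS)] is a left inverse of J'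
    (Matrix.of fun i j =>
        Sum.elim (fun j' => A i j') (fun j' => (-(Sᴴ + ε • S)) i j') j) * J' = 1 ∧
    -- (iv)
    Φ * J' = ε • (Matrix.of fun i j =>
        Sum.elim (fun _ => (0 : R)) (fun i' => (1 : Matrix (Fin m) (Fin m) R) i' j) i) ∧
    (IsUnit Φ →
      {x : Fin n ⊕ Fin m → R | (Jᴴ * Φ).mulVec x = 0} =
        {x : Fin n ⊕ Fin m → R | ∃ z : Fin m → R, x = J'.mulVec z}) := by
  have hsε : star ε = ε := by rcases hε with h | h <;> simp [h]
  have hε2 : ε * ε = 1 := by rcases hε with h | h <;> simp [h]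
  -- block presentations of J and J'
  have hJH : J = (fromBlocks (1 : Matrix (Fin n) (Fin n) R) (0 : Matrix (Fin n) (Fin m) R)
      (0 : Matrix (Fin m) (Fin n) R) (0 : Matrix (Fin m) (Fin m) R)).submatrix id Sum.inl := by
    rw [hJ]; ext i j; cases i <;> simp
  have hJ'G : J' = (fromBlocks B (0 : Matrix (Fin n) (Fin m) R)
      (-lam') (0 : Matrix (Fin m) (Fin m) R)).submatrix id Sum.inl := by
    rw [hJ']; ext i j; cases i <;> simp
  have hlamH : lamᴴ = ε • lam := by
    rw [hlam]
    simp [conjTranspose_add, conjTranspose_smul, hsε, smul_add, smul_smul, hε2, add_comm]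
  have hlam'H : lam'ᴴ = ε • lam' := by
    rw [hlam']
    simp [conjTranspose_add, conjTranspose_smul, hsε, smul_add, smul_smul, hε2, add_comm]
  have h2' : lam'ᴴ * A = ε • (Bᴴ * lam) := by
    have h := congrArg conjTranspose h2
    simp only [conjTranspose_mul, conjTranspose_conjTranspose] at h
    rw [h, hlamH, Matrix.mul_smul]
  -- part (i)
  have e1 : Jᴴ * Ψ * J = θ := by
    rw [hJH, hΨ, conjTranspose_submatrix, Matrix.mul_assoc, aux_mulsub, aux_subsub,
      fromBlocks_conjTranspose, fromBlocks_multiply, fromBlocks_multiply, aux_b11]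
    simp
  -- part (ii)
  have e2 : ∃ Y : Matrix (Fin m) (Fin m) R, J'ᴴ * Ψ * J' = -θ' + (Y - ε • Yᴴ) := by
    refine ⟨X₀ + Bᴴ * θ * B, ?_⟩
    rw [hJ'G, hΨ, conjTranspose_submatrix, Matrix.mul_assoc, aux_mulsub, aux_subsub,
      fromBlocks_conjTranspose, fromBlocks_multiply, fromBlocks_multiply, aux_b11]
    have hl : lam'ᴴ * (ε • A * B) = Bᴴ * θ * B + ε • (Bᴴ * θᴴ * B) := by
      calc lam'ᴴ * (ε • A * B) = ε • (lam'ᴴ * A * B) := by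
            rw [Matrix.smul_mul, Matrix.mul_smul, Matrix.mul_assoc]
        _ = (ε * ε) • (Bᴴ * lam * B) := by rw [h2', Matrix.smul_mul, smul_smul]
        _ = Bᴴ * lam * B := by rw [hε2, one_smul]
        _ = Bᴴ * θ * B + ε • (Bᴴ * θᴴ * B) := by
            rw [hlam, Matrix.mul_add, Matrix.add_mul, Matrix.mul_smul, Matrix.smul_mul]
    have hkey : (-lam')ᴴ * (ε • A * B + -S * -lam')
        = -(Bᴴ * θ * B) - ε • (Bᴴ * θᴴ * B) - lam'ᴴ * S * lam' := by
      rw [conjTranspose_neg, Matrix.neg_mul,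
        show -S * -lam' = S * lam' by rw [Matrix.neg_mul, Matrix.mul_neg, neg_neg],
        Matrix.mul_add, hl, show lam'ᴴ * (S * lam') = lam'ᴴ * S * lam' from
          (Matrix.mul_assoc _ _ _).symm]
      abel
    have hY : (X₀ + Bᴴ * θ * B)ᴴ = X₀ᴴ + Bᴴ * θᴴ * B := by
      simp [conjTranspose_add, conjTranspose_mul, Matrix.mul_assoc]
    rw [hkey, h3, hY]
    simp only [Matrix.zero_mul, add_zero]
    rw [← Matrix.mul_assoc Bᴴ θ B]
    simp only [smul_add, smul_sub, neg_add, neg_sub]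
    abel
  -- block form of Φ
  have hΦB : Φ = fromBlocks lam Aᴴ (ε • A) (-(S + ε • Sᴴ)) := by
    have c1 : (0 : Matrix (Fin n) (Fin m) R) + ε • (ε • A)ᴴ = Aᴴ := by
      rw [conjTranspose_smul, hsε, smul_smul, hε2, one_smul, zero_add]
    have c2 : ε • A + ε • (0 : Matrix (Fin n) (Fin m) R)ᴴ = ε • A := by simp
    have c3 : -S + ε • (-S)ᴴ = -(S + ε • Sᴴ) := by
      rw [conjTranspose_neg, smul_neg, neg_add]
    rw [hΦ, hΨ, fromBlocks_conjTranspose, Matrix.fromBlocks_smul, Matrix.fromBlocks_add,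
      c1, c2, c3, ← hlam]
  -- key block identities for Φ * G
  have b11 : lam * B + Aᴴ * -lam' = 0 := by
    rw [Matrix.mul_neg, h2]
    exact add_neg_cancel _
  have b21 : (ε • A) * B + -(S + ε • Sᴴ) * -lam'
      = ε • (1 : Matrix (Fin m) (Fin m) R) := by
    have hs : ε • ((Sᴴ + ε • S) * lam') = (S + ε • Sᴴ) * lam' := by
      rw [← Matrix.smul_mul, smul_add, smul_smul, hε2, one_smul, add_comm]
    rw [Matrix.neg_mul, Matrix.mul_neg, neg_neg, ← hs, Matrix.smul_mul, ← smul_add, h1]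
  have hΦG : Φ * (fromBlocks B (0 : Matrix (Fin n) (Fin m) R)
      (-lam') (0 : Matrix (Fin m) (Fin m) R)) =
      fromBlocks 0 0 (ε • (1 : Matrix (Fin m) (Fin m) R)) 0 := by
    rw [hΦB, fromBlocks_multiply, b11, b21]
    simp
  -- part (iv)
  have e4 : Φ * J' = ε • (Matrix.of fun i j =>
      Sum.elim (fun _ => (0 : R)) (fun i' => (1 : Matrix (Fin m) (Fin m) R) i' j) i) := by
    rw [hJ'G, aux_mulsub, hΦG]
    ext i j
    cases i <;> simp [Matrix.one_apply]
  -- part (iii)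
  have e3 : (Matrix.of fun i j =>
      Sum.elim (fun j' => A i j') (fun j' => (-(Sᴴ + ε • S)) i j') j) * J' = 1 := by
    have hK : (Matrix.of fun i j =>
        Sum.elim (fun j' => A i j') (fun j' => (-(Sᴴ + ε • S)) i j') j)
        = (fromBlocks A (-(Sᴴ + ε • S)) (0 : Matrix (Fin m) (Fin n) R)
            (0 : Matrix (Fin m) (Fin m) R)).submatrix Sum.inl id := by
      ext i j; cases j <;> simp
    rw [hK, hJ'G, aux_subsub, fromBlocks_multiply, aux_b11]
    rw [Matrix.neg_mul, Matrix.mul_neg, neg_neg, h1]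
  refine ⟨e1, e2, e3, e4, ?_⟩
  -- part (v)
  intro hU
  have hdet : IsUnit Φ.det := (Matrix.isUnit_iff_isUnit_det Φ).mp hU
  have hJmv : ∀ w : Fin n ⊕ Fin m → R, Jᴴ.mulVec w = fun i => w (Sum.inl i) := by
    intro w
    funext i
    rw [hJ]
    simp [Matrix.mulVec, dotProduct, Fintype.sum_sum_type, Matrix.one_apply,
      apply_ite, Finset.sum_ite_eq]
  have hE' : (Matrix.of fun i j =>
      Sum.elim (fun _ => (0 : R)) (fun i' => (1 : Matrix (Fin m) (Fin m) R) i' j) i)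
      = (fromBlocks (0 : Matrix (Fin n) (Fin n) R) (0 : Matrix (Fin n) (Fin m) R)
          (0 : Matrix (Fin m) (Fin n) R) (1 : Matrix (Fin m) (Fin m) R)).submatrix
          id Sum.inr := by
    ext i j; cases i <;> simp
  ext x
  simp only [Set.mem_setOf_eq]
  constructor
  · intro hx
    have htop : ∀ i, Φ.mulVec x (Sum.inl i) = 0 := by
      intro i
      have h := congrFun hx i
      rw [← Matrix.mulVec_mulVec, hJmv] at h
      exact h
    refine ⟨fun i => ε * Φ.mulVec x (Sum.inr i), ?_⟩
    have hmv : Φ.mulVec (J'.mulVec (fun i => ε * Φ.mulVec x (Sum.inr i))) = Φ.mulVec x := by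
      rw [Matrix.mulVec_mulVec, e4]
      funext i
      rcases i with i | i
      · rw [htop i]
        simp [Matrix.mulVec, dotProduct, Fintype.sum_sum_type]
      · simp [Matrix.mulVec, dotProduct, Fintype.sum_sum_type, Matrix.one_apply,
          apply_ite, Finset.sum_ite_eq, ← mul_assoc, hε2]
    calc x = (Φ⁻¹ * Φ) *ᵥ x := by rw [Matrix.nonsing_inv_mul Φ hdet, Matrix.one_mulVec]
      _ = Φ⁻¹ *ᵥ (Φ *ᵥ x) := (Matrix.mulVec_mulVec _ _ _).symm
      _ = Φ⁻¹ *ᵥ (Φ *ᵥ (J' *ᵥ fun i => ε * Φ.mulVec x (Sum.inr i))) := by rw [hmv]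
      _ = (Φ⁻¹ * Φ) *ᵥ (J' *ᵥ fun i => ε * Φ.mulVec x (Sum.inr i)) :=
          Matrix.mulVec_mulVec _ _ _
      _ = J' *ᵥ fun i => ε * Φ.mulVec x (Sum.inr i) := by
          rw [Matrix.nonsing_inv_mul Φ hdet, Matrix.one_mulVec]
  · rintro ⟨z, rfl⟩
    rw [Matrix.mulVec_mulVec]
    have hz : Jᴴ * Φ * J' = 0 := by
      rw [Matrix.mul_assoc, e4, Matrix.mul_smul, hE', hJH, conjTranspose_submatrix,
        aux_subsub, fromBlocks_conjTranspose, fromBlocks_multiply, aux_b12]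
      simp
    rw [hz, Matrix.zero_mulVec]
end

section
/- Let R be a commutative ring with involution r ↦ r̄, and let h, m ≥ 0. Let λ be an invertible h×h matrix over R with λᴴ = λ, and let ν be an m×h matrix admitting a right inverse ρ (ν·ρ = 1ₘ). Set j = λ⁻¹·νᴴ, an h×m matrix. Then: (i) ρᴴ·λ is a left inverse of j, so j is a split injection; (ii) the matrix 1ₕ − ρ·ν is idempotent with image {x ∈ Rʰ : ν·x = 0}, so ker ν is a direct summand of Rʰ; (iii) for every x ∈ Rʰ, one has yᴴ·λ·x = 0 for all y ∈ Rʰ with ν·y = 0 if and only if x = j·z for some z ∈ Rᵐ, i.e., the image of j is exactly the orthogonal complement of ker ν with respect to λ. (This is the algebraic content of Proposition 9.1: an extended symmetric form (H, λ, ν) with λ nonsingular and ν surjective gives rise to a 2-sided primitive embedding ker ν ↪ H ↩ Q*.) -/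
/- STATEMENT 11 (algebraic content of Proposition 9.1): an extended symmetric form
(H, λ, ν) with λ nonsingular hermitian and ν split surjective gives rise to a 2-sided
primitive embedding ker ν ↪ H ↩ Q*: j = λ⁻¹νᴴ is a split injection, ker ν is a direct
summand (the image of the idempotent 1 − ρν), and the image of j is exactly the
λ-orthogonal complement of ker ν. -/

open Matrix

theorem stmt11 (R : Type*) [CommRing R] [StarRing R] (h m : ℕ)
    (lam : Matrix (Fin h) (Fin h) R) (hherm : lamᴴ = lam)
    (lamInv : Matrix (Fin h) (Fin h) R)
    (hinv : lam * lamInv = 1) (hinv' : lamInv * lam = 1)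
    (ν : Matrix (Fin m) (Fin h) R) (ρ : Matrix (Fin h) (Fin m) R) (hρ : ν * ρ = 1)
    (j : Matrix (Fin h) (Fin m) R) (hj : j = lamInv * νᴴ) :
    -- (i) ρᴴ·λ is a left inverse of j
    (ρᴴ * lam) * j = 1 ∧
    -- (ii) 1 − ρν is idempotent with image ker ν, so ker ν is a direct summand of Rʰ
    ((1 - ρ * ν) * (1 - ρ * ν) = 1 - ρ * ν ∧
      Set.range (1 - ρ * ν).mulVec = {x : Fin h → R | ν.mulVec x = 0} ∧
      ∃ c : Submodule R (Fin h → R), IsCompl (LinearMap.ker ν.mulVecLin) c) ∧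
    -- (iii) the image of j is the λ-orthogonal complement of ker ν
    (∀ x : Fin h → R,
      (∀ y : Fin h → R, ν.mulVec y = 0 → (fun i => star (y i)) ⬝ᵥ lam.mulVec x = 0) ↔
        ∃ z : Fin m → R, x = j.mulVec z) := by
  have hνM : ν * (1 - ρ * ν) = 0 := by
    rw [Matrix.mul_sub, Matrix.mul_one, ← Matrix.mul_assoc, hρ, Matrix.one_mul, sub_self]
  have he : (ρ * ν) * (ρ * ν) = ρ * ν := by
    rw [Matrix.mul_assoc, ← Matrix.mul_assoc ν, hρ, Matrix.one_mul]
  refine ⟨?_, ⟨?_, ?_, ?_⟩, ?_⟩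
  · rw [hj, Matrix.mul_assoc, ← Matrix.mul_assoc lam, hinv, Matrix.one_mul,
      ← Matrix.conjTranspose_mul, hρ, Matrix.conjTranspose_one]
  · rw [Matrix.sub_mul, Matrix.one_mul, Matrix.mul_sub, Matrix.mul_one, he]
    abel
  · ext x
    constructor
    · rintro ⟨w, rfl⟩
      show ν.mulVec _ = 0
      rw [Matrix.mulVec_mulVec, hνM, Matrix.zero_mulVec]
    · intro hx
      refine ⟨x, ?_⟩
      have hx' : ν.mulVec x = 0 := hx
      rw [Matrix.sub_mulVec, Matrix.one_mulVec, ← Matrix.mulVec_mulVec, hx',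
        Matrix.mulVec_zero, sub_zero]
  · refine ⟨LinearMap.range (ρ * ν).mulVecLin, ?_, ?_⟩
    · rw [Submodule.disjoint_def]
      rintro x hx ⟨w, rfl⟩
      simp only [Matrix.mulVecLin_apply, LinearMap.mem_ker] at *
      have hw : ν.mulVec ((ρ * ν).mulVec w) = ν.mulVec w := by
        rw [Matrix.mulVec_mulVec, ← Matrix.mul_assoc, hρ, Matrix.one_mul]
      rw [hw] at hx
      show (ρ * ν).mulVec w = 0
      rw [← Matrix.mulVec_mulVec, hx, Matrix.mulVec_zero]
    · rw [codisjoint_iff, eq_top_iff]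
      rintro x -
      refine Submodule.mem_sup.2 ⟨x - (ρ * ν).mulVec x, ?_, (ρ * ν).mulVec x, ⟨x, rfl⟩, by abel⟩
      show ν.mulVec (x - (ρ * ν).mulVec x) = 0
      rw [Matrix.mulVec_sub, Matrix.mulVec_mulVec, ← Matrix.mul_assoc, hρ,
        Matrix.one_mul, sub_self]
  · intro x
    constructor
    · intro hx
      refine ⟨ρᴴ.mulVec (lam.mulVec x), ?_⟩
      have key : (1 - ρ * ν)ᴴ.mulVec (lam.mulVec x) = 0 := by
        funext i
        have hy : ν.mulVec ((1 - ρ * ν).mulVec (Pi.single i 1)) = 0 := by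
          rw [Matrix.mulVec_mulVec, hνM, Matrix.zero_mulVec]
        have h1 : star ((1 - ρ * ν).mulVec (Pi.single i 1)) ⬝ᵥ lam.mulVec x = 0 := hx _ hy
        have hsingle : star (Pi.single i 1 : Fin h → R) = Pi.single i 1 := by
          funext k
          by_cases hk : k = i <;> simp [hk, Pi.single_apply]
        rw [Matrix.star_mulVec, hsingle] at h1
        have h2 : (Pi.single i 1 : Fin h → R) ⬝ᵥ (1 - ρ * ν)ᴴ.mulVec (lam.mulVec x) = 0 := by
          rw [Matrix.dotProduct_mulVec]; exact h1
        rw [single_dotProduct, one_mul] at h2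
        simpa using h2
      have key2 : lam.mulVec x = (νᴴ * ρᴴ).mulVec (lam.mulVec x) := by
        have h3 : (1 - ρ * ν)ᴴ = 1 - νᴴ * ρᴴ := by
          rw [Matrix.conjTranspose_sub, Matrix.conjTranspose_one, Matrix.conjTranspose_mul]
        rw [h3, Matrix.sub_mulVec, Matrix.one_mulVec, sub_eq_zero] at key
        exact key
      have h4 : (νᴴ * ρᴴ).mulVec (lam.mulVec x) = νᴴ.mulVec (ρᴴ.mulVec (lam.mulVec x)) :=
        (Matrix.mulVec_mulVec _ _ _).symm
      rw [hj, ← Matrix.mulVec_mulVec, ← h4, ← key2, Matrix.mulVec_mulVec, hinv',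
        Matrix.one_mulVec]
    · rintro ⟨z, rfl⟩ y hy
      show star y ⬝ᵥ lam.mulVec (j.mulVec z) = 0
      rw [hj, Matrix.mulVec_mulVec, ← Matrix.mul_assoc, hinv, Matrix.one_mul,
        Matrix.dotProduct_mulVec, ← Matrix.star_mulVec, hy]
      simp
end

section
/- Let R be a commutative ring with involution r ↦ r̄ and let a ∈ R satisfy ā = a. Set U = [[0,1],[1,a]] ∈ M₂(R). Then U is invertible with det U = −1, and: (i) Uᴴ·[[−a,0],[1,0]]·U = [[0,1],[0,0]] (an exact equality of matrices, so U is an isometry from the hyperbolic (+1)-quadratic form to the union form (R,−a) ∪_{id} (R,a)); (ii) U·(−a,1)ᵀ = (1,0)ᵀ; (iii) U·(a,1)ᵀ = (1,2a)ᵀ. Consequently the 2-sided primitive embedding (R,−a) ↪ H₊(R) ↩ (R,a) given by the vectors (−a,1) and (a,1) is isomorphic to the embedding (R,−a) ↪ (R,−a)∪_{id}(R,a) ↩ (R,a) given by (1,0) and (1,2a). (This is the computation of Corollary 8.9, showing that the boundary automorphism associated to the normal (2k−1)-smoothing of M_{a,1} is trivial.) -/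
/- STATEMENT 13 (computation of Corollary 8.9): for a self-conjugate element a of a
commutative ring with involution, U = [[0,1],[1,a]] is an invertible matrix of
determinant −1 giving an exact isometry Uᴴ·[[−a,0],[1,0]]·U = [[0,1],[0,0]] from the
hyperbolic (+1)-quadratic form to the union form (R,−a) ∪_id (R,a), and it carries the
embedding vectors (−a,1), (a,1) to (1,0), (1,2a) respectively. -/

open Matrix

theorem stmt13 (R : Type*) [CommRing R] [StarRing R] (a : R) (ha : star a = a) :
    IsUnit (!![0, 1; 1, a] : Matrix (Fin 2) (Fin 2) R) ∧
    (!![0, 1; 1, a] : Matrix (Fin 2) (Fin 2) R).det = -1 ∧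
    -- (i)
    (!![0, 1; 1, a] : Matrix (Fin 2) (Fin 2) R)ᴴ * !![-a, 0; 1, 0] * !![0, 1; 1, a] =
      !![0, 1; 0, 0] ∧
    -- (ii)
    (!![0, 1; 1, a] : Matrix (Fin 2) (Fin 2) R).mulVec ![-a, 1] = ![1, 0] ∧
    -- (iii)
    (!![0, 1; 1, a] : Matrix (Fin 2) (Fin 2) R).mulVec ![a, 1] = ![1, 2 * a] := by
  have hdet : (!![0, 1; 1, a] : Matrix (Fin 2) (Fin 2) R).det = -1 := by
    simp [Matrix.det_fin_two]
  refine ⟨?_, hdet, ?_, ?_, ?_⟩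
  · rw [Matrix.isUnit_iff_isUnit_det, hdet]
    exact isUnit_one.neg
  · ext i j
    fin_cases i <;> fin_cases j <;>
      simp [Matrix.mul_apply, Fin.sum_univ_two, conjTranspose_apply, ha] <;> ring
  · funext i; fin_cases i <;> simp [Matrix.mulVec, dotProduct, Fin.sum_univ_two]
  · funext i; fin_cases i <;> simp [Matrix.mulVec, dotProduct, Fin.sum_univ_two] <;> ring
end
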